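/- arXiv:2010.04333 — 10 statements merged into one kernel-verified Lean document; each statement's English description precedes it below -/
import Mathlib

section
/- There exist a constant c > 0 and a threshold n₀ such that for all n ≥ n₀, the number C_n of isomorphism classes of circle graphs on n vertices satisfies log₂ C_n ≥ n·log₂ n − c·n. -/
/-- The setoid on graphs on `Fin n` satisfying a property `P`, identifying isomorphic graphs. -/
def graphIsoSetoid (n : ℕ) (P : SimpleGraph (Fin n) → Prop) :
    Setoid {G : SimpleGraph (Fin n) // P G} where
  r G H := Nonempty (G.val ≃g H.val)
  iseqv := ⟨fun _ => ⟨SimpleGraph.Iso.refl⟩, fun ⟨e⟩ => ⟨e.symm⟩,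
    fun ⟨e⟩ ⟨f⟩ => ⟨e.trans f⟩⟩

/-- The number of isomorphism classes of graphs on `Fin n` satisfying `P`. -/
noncomputable def numIsoClasses (n : ℕ) (P : SimpleGraph (Fin n) → Prop) : ℕ :=
  Nat.card (Quotient (graphIsoSetoid n P))

/-- `G` is a circle graph: the vertices correspond to `n` chords of a circle, given by `2n`
pairwise distinct endpoints on the circle (positions in `Fin (2n)`), with `u` adjacent to `v`
iff the corresponding intervals overlap (i.e. the chords interleave). -/
def IsCircleGraph {n : ℕ} (G : SimpleGraph (Fin n)) : Prop :=
  ∃ s e : Fin n → Fin (2 * n),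
    (∀ v, s v < e v) ∧
    Function.Injective (Sum.elim s e) ∧
    ∀ u v : Fin n, u ≠ v →
      (G.Adj u v ↔
        (s u < s v ∧ s v < e u ∧ e u < e v) ∨ (s v < s u ∧ s u < e v ∧ e v < e u))


/-! Encode a pair of families `pe, qe : Fin h → Perm (Fin h)` as a chord diagram with `h²` "data"
chords: chord `(u, v)` starts in the `u`-th block of the left arc, at offset `pe u v`, and ends in
the `v`-th block of the right arc, at offset `qe v u`. Two data chords with the same `u` cross iff
`pe u` orders them as their `v`'s are ordered, and symmetrically for the same `v`; so the graph
determines `pe` and `qe` once every data chord is pinned down. Nested separator chords, one at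
the start of each block, tagged by one (left) or two (right) pendant chords, pin them down: the
separators are the neighbours of the degree-one vertices and are told apart by their degrees, and
a data chord is determined by which separators it crosses. Padding with isolated chords, this
gives `(h!)^(2h)` pairwise non-isomorphic circle graphs on any `n ≥ h² + 5h` vertices, and with
`h ≈ √n` Stirling's bound turns `log ((h!)^(2h))` into `n log n - O(n)`. -/

open Function SimpleGraph Equiv

section ChordGraph

variable {V W E : Type*} [LinearOrder E]

def chordGraph (s e : V → E) : SimpleGraph V :=
  fromRel fun u v => s u < s v ∧ s v < e u ∧ e u < e v

instance [DecidableEq V] (s e : V → E) : DecidableRel (chordGraph s e).Adj :=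
  fun _ _ => inferInstanceAs (Decidable (_ ∧ _))

def chordGraphCompIso (s e : V → E) (f : W ≃ V) :
    chordGraph (s ∘ f) (e ∘ f) ≃g chordGraph s e where
  toEquiv := f
  map_rel_iff' := by simp [chordGraph, f.injective.ne_iff]

theorem isCircleGraph_chordGraph {n : ℕ} (s e : Fin n → E) (hse : ∀ v, s v < e v)
    (hinj : Injective (Sum.elim s e)) : IsCircleGraph (chordGraph s e) := by
  classical
  set T := Finset.univ.image (Sum.elim s e)
  have hT : T.card = 2 * n := by
    rw [Finset.card_image_of_injective _ hinj]; simp [two_mul]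
  let f : Fin n ⊕ Fin n → Fin (2 * n) := fun x =>
    (T.orderIsoOfFin hT).symm ⟨Sum.elim s e x, Finset.mem_image_of_mem _ (Finset.mem_univ x)⟩
  have hf : ∀ x y, f x < f y ↔ Sum.elim s e x < Sum.elim s e y := fun x y =>
    (T.orderIsoOfFin hT).symm.lt_iff_lt
  refine ⟨f ∘ Sum.inl, f ∘ Sum.inr, fun v => (hf _ _).2 (hse v), ?_, fun u v huv => ?_⟩
  · rw [Sum.elim_comp_inl_inr]
    intro x y hxy
    exact hinj (congrArg Subtype.val ((T.orderIsoOfFin hT).symm.injective hxy))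
  · simp only [chordGraph, fromRel_adj, comp_apply, hf, Sum.elim_inl, Sum.elim_inr]
    exact and_iff_right huv

end ChordGraph

theorem card_le_numIsoClasses {n : ℕ} {P : SimpleGraph (Fin n) → Prop} {ι : Type*}
    (Γ : ι → SimpleGraph (Fin n)) (hP : ∀ i, P (Γ i))
    (hΓ : ∀ i j, (Γ i ≃g Γ j) → i = j) :
    Nat.card ι ≤ numIsoClasses n P := by
  have : Finite (Quotient (graphIsoSetoid n P)) := Quotient.finite _
  refine Nat.card_le_card_of_injective (fun i => Quotient.mk _ ⟨Γ i, hP i⟩) fun i j hij => ?_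
  obtain ⟨φ⟩ := Quotient.exact hij
  exact hΓ i j φ

theorem Equiv.Perm.eq_of_lt_iff_lt {α : Type*} [LinearOrder α] [WellFoundedLT α]
    {f g : Perm α} (H : ∀ a b, f a < f b ↔ g a < g b) : f = g := by
  have hmono : StrictMono (g ∘ f.symm) := fun x y hxy => by
    simpa [← H] using hxy
  have := congrArg DFunLike.coe
    (Subsingleton.elim (hmono.orderIsoOfSurjective _ (g.surjective.comp f.symm.surjective))
      (OrderIso.refl α))
  ext a
  simpa using (congrFun this (f a)).symm

theorem Nat.eq_of_mul_add_eq_mul_add {a b c d h : ℕ} (hc : c < h) (hd : d < h)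
    (H : a * h + c = b * h + d) : a = b ∧ c = d := by
  rcases lt_trichotomy a b with hab | rfl | hab
  · nlinarith
  · omega
  · nlinarith

def lex3 (a b c : ℕ) : ℕ ×ₗ ℕ ×ₗ ℕ := toLex (a, toLex (b, c))

@[simp]
theorem lex3_lt_lex3 {a b c a' b' c' : ℕ} :
    lex3 a b c < lex3 a' b' c' ↔ a < a' ∨ a = a' ∧ (b < b' ∨ b = b' ∧ c < c') := by
  simp [lex3, Prod.Lex.toLex_lt_toLex]

@[simp]
theorem lex3_inj {a b c a' b' c' : ℕ} :
    lex3 a b c = lex3 a' b' c' ↔ a = a' ∧ b = b' ∧ c = c' := by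
  simp [lex3]

namespace RigidChords

inductive Vertex (h r : ℕ)
  | chord (u v : Fin h)
  | sepL (k : Fin h)
  | sepR (k : Fin h)
  | leafL (k : Fin h)
  | leafR (k : Fin h) (i : Fin 2)
  | isolated (t : Fin r)
  deriving DecidableEq, Fintype

variable {h r : ℕ}

def Vertex.equivSum : Vertex h r ≃
    (Fin h × Fin h) ⊕ Fin h ⊕ Fin h ⊕ Fin h ⊕ (Fin h × Fin 2) ⊕ Fin r where
  toFun
    | .chord u v => .inl (u, v)
    | .sepL k => .inr (.inl k)
    | .sepR k => .inr (.inr (.inl k))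
    | .leafL k => .inr (.inr (.inr (.inl k)))
    | .leafR k i => .inr (.inr (.inr (.inr (.inl (k, i)))))
    | .isolated t => .inr (.inr (.inr (.inr (.inr t))))
  invFun
    | .inl (u, v) => .chord u v
    | .inr (.inl k) => .sepL k
    | .inr (.inr (.inl k)) => .sepR k
    | .inr (.inr (.inr (.inl k))) => .leafL k
    | .inr (.inr (.inr (.inr (.inl (k, i))))) => .leafR k i
    | .inr (.inr (.inr (.inr (.inr t)))) => .isolated t
  left_inv x := by cases x <;> rfl
  right_inv x := by rcases x with ⟨u, v⟩ | k | k | k | ⟨k, i⟩ | t <;> rfl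

theorem card_vertex : Fintype.card (Vertex h r) = h * h + 5 * h + r := by
  rw [Fintype.card_congr Vertex.equivSum]
  simp only [Fintype.card_sum, Fintype.card_prod, Fintype.card_fin]
  ring

/- Endpoints are `lex3 arc block offset`, read left to right around the circle; the arcs are
the left blocks (0), the ends of the left separators (1), the right blocks (2), the ends of the
right separators (3) and the isolated chords (4). Blocks of arcs 1 and 3 are indexed by `h - k`,
so that the separators are nested. -/
variable (pe qe : Fin h → Perm (Fin h))

def startPt : Vertex h r → ℕ ×ₗ ℕ ×ₗ ℕ
  | .chord u v => lex3 0 u (pe u v + 1)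
  | .sepL k => lex3 0 k 0
  | .leafL k => lex3 1 (h - k) 0
  | .sepR k => lex3 2 k 0
  | .leafR k i => lex3 3 (h - k) i
  | .isolated t => lex3 4 t 0

def endPt : Vertex h r → ℕ ×ₗ ℕ ×ₗ ℕ
  | .chord u v => lex3 2 v (qe v u + 1)
  | .sepL k => lex3 1 (h - k) 1
  | .leafL k => lex3 1 (h - k) 2
  | .sepR k => lex3 3 (h - k) 2
  | .leafR k i => lex3 3 (h - k) (4 - i)
  | .isolated t => lex3 4 t 1

theorem startPt_lt_endPt (x : Vertex h r) : startPt pe x < endPt qe x := by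
  cases x <;> simp only [startPt, endPt, lex3_lt_lex3, true_and] <;> omega

theorem injective_startPt_endPt :
    Injective (Sum.elim (startPt (r := r) pe) (endPt (r := r) qe)) := by
  refine Injective.sumElim ?_ ?_ ?_
  · intro x y; cases x <;> cases y <;> simp +contextual [startPt, Fin.val_inj] <;> omega
  · intro x y; cases x <;> cases y <;> simp +contextual [endPt, Fin.val_inj] <;> omega
  · intro x y; cases x <;> cases y <;> simp [startPt, endPt] <;> omega

abbrev graph (r : ℕ) (pe qe : Fin h → Perm (Fin h)) : SimpleGraph (Vertex h r) :=
  chordGraph (startPt pe) (endPt qe)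

variable {pe qe}

theorem adj_sepL_chord {k u v : Fin h} :
    (graph r pe qe).Adj (.sepL k) (.chord u v) ↔ k ≤ u := by
  simp only [chordGraph, fromRel_adj, startPt, endPt, lex3_lt_lex3, ne_eq, reduceCtorEq,
    not_false_eq_true, true_and]
  omega

theorem adj_sepR_chord {k u v : Fin h} :
    (graph r pe qe).Adj (.sepR k) (.chord u v) ↔ k ≤ v := by
  simp only [chordGraph, fromRel_adj, startPt, endPt, lex3_lt_lex3, ne_eq, reduceCtorEq,
    not_false_eq_true, true_and]
  omega

theorem adj_leafL_iff {k : Fin h} {x : Vertex h r} :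
    (graph r pe qe).Adj x (.leafL k) ↔ x = .sepL k := by
  cases x <;> simp [chordGraph, startPt, endPt] <;> omega

theorem adj_leafR_iff {k : Fin h} {i : Fin 2} {x : Vertex h r} :
    (graph r pe qe).Adj x (.leafR k i) ↔ x = .sepR k := by
  cases x <;> simp [chordGraph, startPt, endPt] <;> omega

theorem not_adj_isolated {t : Fin r} {x : Vertex h r} : ¬ (graph r pe qe).Adj x (.isolated t) := by
  cases x <;> simp [chordGraph, startPt, endPt]
  omega

theorem adj_chord_chord_of_left_eq {u v v' : Fin h} (hv : v ≠ v') :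
    (graph r pe qe).Adj (.chord u v) (.chord u v') ↔ (pe u v < pe u v' ↔ v < v') := by
  have := (pe u).injective.ne hv
  simp only [chordGraph, fromRel_adj, startPt, endPt, lex3_lt_lex3, ne_eq, Vertex.chord.injEq,
    true_and]
  omega

theorem adj_chord_chord_of_right_eq {u u' v : Fin h} (hu : u ≠ u') :
    (graph r pe qe).Adj (.chord u v) (.chord u' v) ↔ (u < u' ↔ qe v u < qe v u') := by
  have := (qe v).injective.ne hu
  simp only [chordGraph, fromRel_adj, startPt, endPt, lex3_lt_lex3, ne_eq, Vertex.chord.injEq,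
    true_and]
  omega

theorem exists_chord_of_adj_sepL_of_adj_sepR {k j : Fin h} {x : Vertex h r}
    (hL : (graph r pe qe).Adj (.sepL k) x) (hR : (graph r pe qe).Adj (.sepR j) x) :
    ∃ u v, x = .chord u v := by
  cases x <;> simp_all [chordGraph, startPt, endPt]

theorem neighborFinset_sepL (k : Fin h) :
    (graph r pe qe).neighborFinset (.sepL k) =
      insert (.leafL k) ((Finset.Ici k ×ˢ Finset.univ).image fun p => .chord p.1 p.2) := by
  ext x
  cases x <;> simp [chordGraph, startPt, endPt] <;> omega

theorem neighborFinset_sepR (k : Fin h) :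
    (graph r pe qe).neighborFinset (.sepR k) =
      insert (.leafR k 0) (insert (.leafR k 1)
        ((Finset.univ ×ˢ Finset.Ici k).image fun p => .chord p.1 p.2)) := by
  ext x
  cases x <;> simp [chordGraph, startPt, endPt] <;> omega

theorem injective_chord : Injective fun p : Fin h × Fin h => (Vertex.chord p.1 p.2 : Vertex h r) :=
  fun _ _ hp => by simpa [Prod.ext_iff] using hp

theorem degree_sepL (k : Fin h) : (graph r pe qe).degree (.sepL k) = (h - k) * h + 1 := by
  rw [← card_neighborFinset_eq_degree, neighborFinset_sepL,
    Finset.card_insert_of_notMem (by simp), Finset.card_image_of_injective _ injective_chord]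
  simp

theorem degree_sepR (k : Fin h) : (graph r pe qe).degree (.sepR k) = (h - k) * h + 2 := by
  rw [← card_neighborFinset_eq_degree, neighborFinset_sepR,
    Finset.card_insert_of_notMem (by simp), Finset.card_insert_of_notMem (by simp),
    Finset.card_image_of_injective _ injective_chord]
  simp [mul_comm]

theorem degree_leafL (k : Fin h) : (graph r pe qe).degree (.leafL k) = 1 := by
  rw [← card_neighborFinset_eq_degree, Finset.card_eq_one]
  exact ⟨.sepL k, by ext; simp [adj_comm _ (Vertex.leafL k), adj_leafL_iff]⟩

theorem degree_leafR (k : Fin h) (i : Fin 2) : (graph r pe qe).degree (.leafR k i) = 1 := by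
  rw [← card_neighborFinset_eq_degree, Finset.card_eq_one]
  exact ⟨.sepR k, by ext; simp [adj_comm _ (Vertex.leafR k i), adj_leafR_iff]⟩

theorem exists_sep_of_adj_of_degree_eq_one {x w : Vertex h r}
    (hw : (graph r pe qe).degree w = 1) (hxw : (graph r pe qe).Adj x w) :
    ∃ k, x = .sepL k ∨ x = .sepR k := by
  have hone : ∀ y z, (graph r pe qe).Adj w y → (graph r pe qe).Adj w z → y ≠ z → False :=
    fun y z hy hz hyz => by
      have := Finset.one_lt_card.2
        ⟨y, (mem_neighborFinset _ _ _).2 hy, z, (mem_neighborFinset _ _ _).2 hz, hyz⟩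
      rw [card_neighborFinset_eq_degree] at this
      omega
  cases w with
  | chord u v =>
    exact (hone _ _ (adj_sepL_chord.2 le_rfl).symm (adj_sepR_chord.2 le_rfl).symm (by simp)).elim
  | sepL k =>
    exact (hone _ _ (adj_leafL_iff.2 rfl) (adj_sepL_chord (v := k).2 le_rfl) (by simp)).elim
  | sepR k =>
    exact (hone (.leafR k 0) (.leafR k 1) (adj_leafR_iff.2 rfl) (adj_leafR_iff.2 rfl)
      (by simp)).elim
  | leafL k => exact ⟨k, .inl (adj_leafL_iff.1 hxw)⟩
  | leafR k i => exact ⟨k, .inr (adj_leafR_iff.1 hxw)⟩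
  | isolated t => exact (not_adj_isolated hxw).elim

variable {pe' qe' : Fin h → Perm (Fin h)}

theorem map_sepL (φ : graph r pe qe ≃g graph r pe' qe') (hh : 3 ≤ h) (k : Fin h) :
    φ (.sepL k) = .sepL k := by
  have hleaf : (graph r pe' qe').degree (φ (.leafL k)) = 1 := by
    rw [φ.degree_eq, degree_leafL]
  have hdeg : (graph r pe' qe').degree (φ (.sepL k)) = (h - k) * h + 1 := by
    rw [φ.degree_eq, degree_sepL]
  obtain ⟨j, hj | hj⟩ :=
    exists_sep_of_adj_of_degree_eq_one hleaf (φ.map_adj_iff.2 (adj_leafL_iff.2 rfl))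
  · rw [hj, degree_sepL] at hdeg
    have := (Nat.eq_of_mul_add_eq_mul_add (by omega) (by omega) hdeg).1
    rw [hj, show j = k by omega]
  · rw [hj, degree_sepR] at hdeg
    have := (Nat.eq_of_mul_add_eq_mul_add (by omega) (by omega) hdeg).2
    omega

theorem map_sepR (φ : graph r pe qe ≃g graph r pe' qe') (hh : 3 ≤ h) (k : Fin h) :
    φ (.sepR k) = .sepR k := by
  have hleaf : (graph r pe' qe').degree (φ (.leafR k 0)) = 1 := by
    rw [φ.degree_eq, degree_leafR]
  have hdeg : (graph r pe' qe').degree (φ (.sepR k)) = (h - k) * h + 2 := by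
    rw [φ.degree_eq, degree_sepR]
  obtain ⟨j, hj | hj⟩ :=
    exists_sep_of_adj_of_degree_eq_one hleaf (φ.map_adj_iff.2 (adj_leafR_iff.2 rfl))
  · rw [hj, degree_sepL] at hdeg
    have := (Nat.eq_of_mul_add_eq_mul_add (by omega) (by omega) hdeg).2
    omega
  · rw [hj, degree_sepR] at hdeg
    have := (Nat.eq_of_mul_add_eq_mul_add (by omega) (by omega) hdeg).1
    rw [hj, show j = k by omega]

theorem map_chord (φ : graph r pe qe ≃g graph r pe' qe') (hh : 3 ≤ h) (u v : Fin h) :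
    φ (.chord u v) = .chord u v := by
  have hL : ∀ k, (graph r pe' qe').Adj (.sepL k) (φ (.chord u v)) ↔ k ≤ u := fun k => by
    rw [← map_sepL φ hh k, φ.map_adj_iff, adj_sepL_chord]
  have hR : ∀ k, (graph r pe' qe').Adj (.sepR k) (φ (.chord u v)) ↔ k ≤ v := fun k => by
    rw [← map_sepR φ hh k, φ.map_adj_iff, adj_sepR_chord]
  obtain ⟨u', v', he⟩ :=
    exists_chord_of_adj_sepL_of_adj_sepR ((hL u).2 le_rfl) ((hR v).2 le_rfl)
  simp only [he, adj_sepL_chord, adj_sepR_chord] at hL hR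
  rw [he, eq_of_forall_le_iff hL, eq_of_forall_le_iff hR]

theorem eq_of_iso (φ : graph r pe qe ≃g graph r pe' qe') (hh : 3 ≤ h) :
    pe = pe' ∧ qe = qe' := by
  have hadj : ∀ a b c d, (graph r pe' qe').Adj (.chord a b) (.chord c d) ↔
      (graph r pe qe).Adj (.chord a b) (.chord c d) := fun a b c d => by
    simpa only [map_chord φ hh] using φ.map_adj_iff (v := .chord a b) (w := .chord c d)
  refine ⟨funext fun u => Perm.eq_of_lt_iff_lt fun a b => ?_,
    funext fun v => Perm.eq_of_lt_iff_lt fun a b => ?_⟩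
  · rcases eq_or_ne a b with rfl | hab
    · simp
    have := hadj u a u b
    rw [adj_chord_chord_of_left_eq hab, adj_chord_chord_of_left_eq hab] at this
    tauto
  · rcases eq_or_ne a b with rfl | hab
    · simp
    have := hadj a v b v
    rw [adj_chord_chord_of_right_eq hab, adj_chord_chord_of_right_eq hab] at this
    tauto

theorem factorial_pow_le_numIsoClasses (hh : 3 ≤ h) :
    h.factorial ^ (2 * h) ≤ numIsoClasses (h * h + 5 * h + r) IsCircleGraph := by
  let ψ : Vertex h r ≃ Fin (h * h + 5 * h + r) := Fintype.equivFinOfCardEq card_vertex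
  let Γ (p : (Fin h → Perm (Fin h)) × (Fin h → Perm (Fin h))) :=
    chordGraph (startPt p.1 ∘ ψ.symm) (endPt p.2 ∘ ψ.symm)
  have hcircle (p) : IsCircleGraph (Γ p) := by
    refine isCircleGraph_chordGraph _ _ (fun v => startPt_lt_endPt _ _ _) ?_
    rw [← Sum.elim_comp_map]
    exact (injective_startPt_endPt p.1 p.2).comp (ψ.symm.injective.sumMap ψ.symm.injective)
  have hrigid (p q) (χ : Γ p ≃g Γ q) : p = q :=
    Prod.ext_iff.2 <| eq_of_iso
      (((chordGraphCompIso _ _ ψ.symm).symm.trans χ).trans (chordGraphCompIso _ _ ψ.symm)) hh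
  calc h.factorial ^ (2 * h)
      = Nat.card ((Fin h → Perm (Fin h)) × (Fin h → Perm (Fin h))) := by
        simp [Nat.card_eq_fintype_card, Fintype.card_perm, two_mul, pow_add]
    _ ≤ _ := card_le_numIsoClasses Γ hcircle hrigid

end RigidChords

section Asymptotics

open Real

theorem Real.log_le_two_mul_sqrt {x : ℝ} (hx : 0 < x) : log x ≤ 2 * √x := by
  have := log_le_sub_one_of_pos (sqrt_pos.2 hx)
  rw [log_sqrt hx.le] at this
  linarith

theorem mul_log_le_of_sub_le_sqrt {m x : ℝ} (hm : 1 ≤ m) (hmx : m ≤ x)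
    (hgap : x - m ≤ 8 * √x) :
    x * log x ≤ m * log m + 17 * x := by
  have hx : 0 < x := by linarith
  have hratio : m * log (x / m) ≤ x - m := by
    have := log_le_sub_one_of_pos (div_pos hx (by linarith : 0 < m))
    calc m * log (x / m) ≤ m * (x / m - 1) := by gcongr
      _ = x - m := by field_simp
  have hlog : log x = log m + log (x / m) := by
    rw [log_div hx.ne' (by linarith), add_sub_cancel]
  have htail : (x - m) * log x ≤ 16 * x := by
    calc (x - m) * log x ≤ 8 * √x * (2 * √x) :=
          mul_le_mul hgap (log_le_two_mul_sqrt hx) (log_nonneg (by linarith)) (by positivity)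
      _ = 16 * (√x * √x) := by ring
      _ = 16 * x := by rw [mul_self_sqrt hx.le]
  calc x * log x = m * log m + m * log (x / m) + (x - m) * log x := by rw [hlog]; ring
    _ ≤ _ := by linarith

theorem sq_mul_log_sq_le_log_factorial_pow {h : ℕ} (hh : h ≠ 0) :
    (h * h : ℝ) * log (h * h) - 2 * (h * h) ≤ log (h.factorial ^ (2 * h) : ℕ) := by
  have hstirling := Stirling.le_log_factorial_stirling hh
  have h1 : 0 ≤ log (h : ℝ) := log_natCast_nonneg h
  have h2 : 0 ≤ log (2 * π) := log_nonneg (by linarith [pi_gt_three])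
  rw [Nat.cast_pow, log_pow, log_mul (by positivity) (by positivity)]
  push_cast
  nlinarith

theorem logb_lower_bound {n h C : ℕ} (hh : h ≠ 0) (hC : h.factorial ^ (2 * h) ≤ C)
    (hhn : h * h ≤ n) (hgap : (n : ℝ) - h * h ≤ 8 * √n) :
    (n : ℝ) * logb 2 n - 38 * n ≤ logb 2 C := by
  have hm : (1 : ℝ) ≤ h * h := by norm_cast; exact Nat.one_le_iff_ne_zero.2 (by positivity)
  have hnat := mul_log_le_of_sub_le_sqrt hm (by exact_mod_cast hhn) hgap
  have hfac := sq_mul_log_sq_le_log_factorial_pow hh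
  have hCpos : 0 < (h.factorial ^ (2 * h) : ℕ) := by positivity
  have hlogC : log (h.factorial ^ (2 * h) : ℕ) ≤ log C :=
    log_le_log (by exact_mod_cast hCpos) (by exact_mod_cast hC)
  have hn : (h * h : ℝ) ≤ n := by exact_mod_cast hhn
  have key : n * log n - 19 * n ≤ log C := by linarith
  have hlog2 : 1 / 2 < log 2 := by linarith [log_two_gt_d9]
  have hn0 : (0 : ℝ) ≤ n := n.cast_nonneg
  rw [logb, logb, le_div_iff₀ (by linarith)]
  calc (n * (log n / log 2) - 38 * n) * log 2 = n * log n - 38 * n * log 2 := by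
        field_simp
    _ ≤ log C := by nlinarith

end Asymptotics

/-- There is a constant `c > 0` such that for all sufficiently large `n`, the number `C_n` of
isomorphism classes of circle graphs on `n` vertices satisfies `log₂ C_n ≥ n log₂ n − c n`. -/
theorem stmt1 :
    ∃ c : ℝ, 0 < c ∧ ∃ n₀ : ℕ, ∀ n : ℕ, n₀ ≤ n →
      Real.logb 2 (numIsoClasses n IsCircleGraph) ≥
        (n : ℝ) * Real.logb 2 n - c * n := by
  refine ⟨38, by norm_num, 36, fun n hn => ?_⟩
  set s := Nat.sqrt n
  have hs : 6 ≤ s := Nat.le_sqrt.2 hn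
  set h := s - 3
  have hsq : h * h + 6 * h + 9 ≤ n := by
    have : s * s = h * h + 6 * h + 9 := by rw [show s = h + 3 by omega]; ring
    linarith [Nat.sqrt_le n]
  have hlt : n < h * h + 8 * h + 16 := by
    have : (s + 1) * (s + 1) = h * h + 8 * h + 16 := by rw [show s = h + 3 by omega]; ring
    linarith [Nat.lt_succ_sqrt n]
  obtain ⟨r, hr⟩ : ∃ r, n = h * h + 5 * h + r := ⟨n - (h * h + 5 * h), by omega⟩
  have hC : h.factorial ^ (2 * h) ≤ numIsoClasses n IsCircleGraph := by
    rw [hr]; exact RigidChords.factorial_pow_le_numIsoClasses (by omega)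
  have hgap : (n : ℝ) - h * h ≤ 8 * √n := by
    have : (n : ℝ) ≤ h * h + 8 * s := by exact_mod_cast (show n ≤ h * h + 8 * s by omega)
    linarith [Real.nat_sqrt_le_real_sqrt (a := n)]
  exact logb_lower_bound (by omega) hC (by omega) hgap
end

section
/- There exist a constant c > 0 and a threshold n₀ such that for all n ≥ n₀, the number T_n of isomorphism classes of circle-trapezoid graphs on n vertices satisfies log₂ T_n ≥ 3n·log₂ n − c·n·log₂ log₂ n. -/
/-- The point of the unit circle with angle `θ`. -/
noncomputable def unitCirclePt (θ : ℝ) : ℝ × ℝ := (Real.cos θ, Real.sin θ)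

/-- `A` is a closed arc of the unit circle. -/
def IsClosedArc (A : Set (ℝ × ℝ)) : Prop :=
  ∃ α β : ℝ, α ≤ β ∧ β - α < 2 * Real.pi ∧ A = unitCirclePt '' Set.Icc α β

/-- `T` is a circle trapezoid: the convex hull of the union of two disjoint closed arcs of the
unit circle. -/
def IsCircleTrapezoid (T : Set (ℝ × ℝ)) : Prop :=
  ∃ A₁ A₂ : Set (ℝ × ℝ), IsClosedArc A₁ ∧ IsClosedArc A₂ ∧ Disjoint A₁ A₂ ∧
    T = convexHull ℝ (A₁ ∪ A₂)

/-- `G` is a circle-trapezoid graph: an intersection graph of circle trapezoids. -/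
def IsCircleTrapezoidGraph {n : ℕ} (G : SimpleGraph (Fin n)) : Prop :=
  ∃ CT : Fin n → Set (ℝ × ℝ), (∀ v, IsCircleTrapezoid (CT v)) ∧
    ∀ u v : Fin n, u ≠ v → (G.Adj u v ↔ (CT u ∩ CT v).Nonempty)


/-!
Inscribe a regular `M`-gon, `M = 4 (Q + 1)`, in the circle and put a short chord, a probe,
inside the arc over each of its sides. The trapezoid spanned by the arcs over the sides `a..b` and
`c..d` meets exactly the probes of those sides: any other probe is cut off from it by a line. So
the labelled intersection graph of the `M` probes and `m = n - M` such trapezoids determines the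
four endpoints of every trapezoid, and choosing each endpoint in its own block of `Q` sides gives
`Q ^ (4 m)` distinct labelled circle-trapezoid graphs, whence `T_n ≥ Q ^ (4 m) / n!`. Taking
`Q = ⌊n / log₂ n⌋` turns this into `log₂ T_n ≥ 4 n log₂ n - n log₂ n - O(n log₂ log₂ n)`.
-/

open Real Set
open scoped Nat

namespace CircleTrapezoid

def arc (x y : ℝ) : Set (ℝ × ℝ) := unitCirclePt '' Icc x y

lemma arc_add_two_pi (x y : ℝ) : arc (x + 2 * π) (y + 2 * π) = arc x y := by
  rw [arc, ← image_add_const_Icc, image_image]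
  refine image_congr fun θ _ => ?_
  simp [unitCirclePt]

lemma arc_subset_arc {x y x' y' : ℝ} (hx : x' ≤ x) (hy : y ≤ y') : arc x y ⊆ arc x' y' :=
  image_mono (Icc_subset_Icc hx hy)

/-- Separation by the line `p.1 cos μ + p.2 sin μ = cos r`. -/
lemma disjoint_convexHull_of_subset_arc {A B : Set (ℝ × ℝ)} {μ r s : ℝ} (hs : 0 ≤ s)
    (hsr : s < r) (hr : r ≤ π) (hA : A ⊆ arc (μ + r) (μ + 2 * π - r))
    (hB : B ⊆ arc (μ - s) (μ + s)) : Disjoint (convexHull ℝ A) (convexHull ℝ B) := by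
  let f : ℝ × ℝ →ₗ[ℝ] ℝ := cos μ • LinearMap.fst ℝ ℝ ℝ + sin μ • LinearMap.snd ℝ ℝ ℝ
  have hf_pt : ∀ θ, f (unitCirclePt θ) = cos (θ - μ) := fun θ => by
    simp [f, unitCirclePt, cos_sub, mul_comm]
  have hA_le : A ⊆ {p | f p ≤ cos r} := by
    rintro _ hp
    obtain ⟨θ, ⟨hθ₁, hθ₂⟩, rfl⟩ := hA hp
    rw [mem_ofPred_eq, hf_pt]
    rcases le_total (θ - μ) π with h | h
    · exact cos_le_cos_of_nonneg_of_le_pi (by linarith) h (by linarith)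
    · rw [← cos_two_pi_sub]
      exact cos_le_cos_of_nonneg_of_le_pi (by linarith) (by linarith) (by linarith)
  have hB_ge : B ⊆ {p | cos s ≤ f p} := by
    rintro _ hp
    obtain ⟨θ, ⟨hθ₁, hθ₂⟩, rfl⟩ := hB hp
    rw [mem_ofPred_eq, hf_pt, ← cos_abs (θ - μ)]
    exact cos_le_cos_of_nonneg_of_le_pi (abs_nonneg _) (by linarith)
      (abs_le.2 ⟨by linarith, by linarith⟩)
  have hcos : cos r < cos s := cos_lt_cos_of_nonneg_of_le_pi hs hr hsr
  rw [disjoint_left]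
  intro p hpA hpB
  have h₁ : f p ≤ cos r := convexHull_min hA_le (convex_halfSpace_le f.isLinear _) hpA
  have h₂ : cos s ≤ f p := convexHull_min hB_ge (convex_halfSpace_ge f.isLinear _) hpB
  linarith

lemma disjoint_arc {x₁ y₁ x₂ y₂ : ℝ} (h₁ : x₁ ≤ y₁) (h₁₂ : y₁ < x₂) (h₂ : x₂ ≤ y₂)
    (h₂₁ : y₂ < x₁ + 2 * π) : Disjoint (arc x₁ y₁) (arc x₂ y₂) := by
  set ε := min (x₂ - y₁) (x₁ + 2 * π - y₂)
  have hε : 0 < ε := lt_min (by linarith) (by linarith)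
  have hε₁ : ε ≤ x₂ - y₁ := min_le_left _ _
  have hε₂ : ε ≤ x₁ + 2 * π - y₂ := min_le_right _ _
  refine Disjoint.mono (subset_convexHull ℝ _) (subset_convexHull ℝ _)
    (disjoint_convexHull_of_subset_arc (μ := (x₂ + y₂) / 2) (r := (y₂ - x₂) / 2 + ε)
      (s := (y₂ - x₂) / 2) (by linarith) (by linarith) (by linarith) ?_ ?_)
  · rw [← arc_add_two_pi]
    exact arc_subset_arc (by linarith) (by linarith)
  · exact arc_subset_arc (by linarith) (by linarith)

lemma isCircleTrapezoid_convexHull_arc_union {x₁ y₁ x₂ y₂ : ℝ} (h₁ : x₁ ≤ y₁) (h₁₂ : y₁ < x₂)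
    (h₂ : x₂ ≤ y₂) (h₂₁ : y₂ < x₁ + 2 * π) :
    IsCircleTrapezoid (convexHull ℝ (arc x₁ y₁ ∪ arc x₂ y₂)) :=
  ⟨_, _, ⟨x₁, y₁, h₁, by linarith, rfl⟩, ⟨x₂, y₂, h₂, by linarith, rfl⟩,
    disjoint_arc h₁ h₁₂ h₂ h₂₁, rfl⟩

variable {M : ℕ}

/-- Arcs with endpoints measured in sides of the regular `M`-gon with vertices at the angles
`2 π k / M`. -/
def polyArc (M : ℕ) (x y : ℝ) : Set (ℝ × ℝ) := arc (2 * π / M * x) (2 * π / M * y)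

def trapezoid (M : ℕ) (x₁ y₁ x₂ y₂ : ℝ) : Set (ℝ × ℝ) :=
  convexHull ℝ (polyArc M x₁ y₁ ∪ polyArc M x₂ y₂)

/-- A chord of the arc over the `t`-th side of the polygon, clear of both of its vertices. -/
def probe (M : ℕ) (t : ℝ) : Set (ℝ × ℝ) :=
  trapezoid M (t + 1 / 4) (t + 1 / 4) (t + 3 / 4) (t + 3 / 4)

lemma polyArc_add_self (hM : M ≠ 0) (x y : ℝ) : polyArc M (x + M) (y + M) = polyArc M x y := by
  have : 2 * π / M * M = 2 * π := div_mul_cancel₀ _ (Nat.cast_ne_zero.2 hM)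
  rw [polyArc, mul_add, mul_add, this, arc_add_two_pi, polyArc]

lemma polyArc_subset_polyArc {x y x' y' : ℝ} (hx : x' ≤ x) (hy : y ≤ y') :
    polyArc M x y ⊆ polyArc M x' y' :=
  arc_subset_arc (by gcongr) (by gcongr)

lemma probe_add_self (hM : M ≠ 0) (t : ℝ) : probe M (t + M) = probe M t := by
  simp only [probe, trapezoid, add_right_comm _ (M : ℝ), polyArc_add_self hM]

lemma isCircleTrapezoid_trapezoid (hM : M ≠ 0) {x₁ y₁ x₂ y₂ : ℝ} (h₁ : x₁ ≤ y₁) (h₁₂ : y₁ < x₂)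
    (h₂ : x₂ ≤ y₂) (h₂₁ : y₂ < x₁ + M) : IsCircleTrapezoid (trapezoid M x₁ y₁ x₂ y₂) := by
  have : 2 * π / M * M = 2 * π := div_mul_cancel₀ _ (Nat.cast_ne_zero.2 hM)
  refine isCircleTrapezoid_convexHull_arc_union (by gcongr) (by gcongr) (by gcongr) ?_
  calc 2 * π / M * y₂ < 2 * π / M * (x₁ + M) := by gcongr
    _ = 2 * π / M * x₁ + 2 * π := by rw [mul_add, this]

lemma isCircleTrapezoid_probe (hM : M ≠ 0) (t : ℝ) : IsCircleTrapezoid (probe M t) := by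
  have hM1 : (1 : ℝ) ≤ M := Nat.one_le_cast.2 (Nat.one_le_iff_ne_zero.2 hM)
  exact isCircleTrapezoid_trapezoid hM le_rfl (by linarith) le_rfl (by linarith)

lemma disjoint_convexHull_probe (hM : M ≠ 0) {A : Set (ℝ × ℝ)} {g h t : ℝ} (hg : g ≤ t)
    (hh : t + 1 ≤ h) (hA : A ⊆ polyArc M h (g + M)) : Disjoint (convexHull ℝ A) (probe M t) := by
  set κ := 2 * π / M
  have hκ : 0 < κ := by positivity
  have hκM : κ * M = 2 * π := div_mul_cancel₀ _ (Nat.cast_ne_zero.2 hM)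
  have hM1 : (1 : ℝ) ≤ M := Nat.one_le_cast.2 (Nat.one_le_iff_ne_zero.2 hM)
  refine disjoint_convexHull_of_subset_arc (μ := κ * (t + 1 / 2)) (r := κ / 2) (s := κ / 4)
    (by positivity) (by linarith) ?_ ?_ ?_
  · calc κ / 2 = π / M := by ring
      _ ≤ π := div_le_self pi_pos.le hM1
  · have : polyArc M (t + 1) (t + M) = arc (κ * (t + 1 / 2) + κ / 2)
        (κ * (t + 1 / 2) + 2 * π - κ / 2) := by
      rw [polyArc]; congr 1
      · ring
      · linear_combination hκM
    exact this ▸ hA.trans (polyArc_subset_polyArc hh (by linarith))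
  · have : polyArc M (t + 1 / 4) (t + 3 / 4) = arc (κ * (t + 1 / 2) - κ / 4)
        (κ * (t + 1 / 2) + κ / 4) := by
      rw [polyArc]; congr 1 <;> ring
    exact this ▸ union_subset (polyArc_subset_polyArc le_rfl (by linarith))
      (polyArc_subset_polyArc (by linarith) le_rfl)

lemma probe_inter_trapezoid_nonempty_iff (hM : M ≠ 0) {a b c d i : ℕ} (hab : a ≤ b)
    (hbc : b < c) (hcd : c ≤ d) (hd : d < M) (hi : i < M) :
    (probe M i ∩ trapezoid M a (b + 1) c (d + 1)).Nonempty ↔ i ∈ Icc a b ∪ Icc c d := by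
  constructor
  · intro hne
    by_contra hout
    simp only [mem_union, mem_Icc, not_or, not_and_or, not_le] at hout
    -- side `i` lies in the gap between the two arcs or in the gap wrapping around from `d + 1`
    -- to `a + M`; in the latter case the probe is also the `(i + M)`-th one
    have hgap : i < a ∨ (b < i ∧ i < c) ∨ d < i := by omega
    suffices ∃ t g h : ℝ, probe M t = probe M i ∧ g ≤ t ∧ t + 1 ≤ h ∧
        polyArc M a (b + 1) ∪ polyArc M c (d + 1) ⊆ polyArc M h (g + M) by
      obtain ⟨t, g, h, ht, hg, hh, hA⟩ := this
      have := disjoint_convexHull_probe hM hg hh hA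
      rw [ht] at this
      exact not_nonempty_iff_eq_empty.2 (disjoint_iff_inter_eq_empty.1 this.symm) hne
    have hwrap : polyArc M a (b + 1) ∪ polyArc M c (d + 1) ⊆ polyArc M (a + M) (d + 1 + M) := by
      rw [polyArc_add_self hM]
      exact union_subset
        (polyArc_subset_polyArc le_rfl (by exact_mod_cast (by omega : b + 1 ≤ d + 1)))
        (polyArc_subset_polyArc (by exact_mod_cast (by omega : a ≤ c)) le_rfl)
    rcases hgap with hia | ⟨hbi, hic⟩ | hdi
    · refine ⟨i + M, d + 1, a + M, probe_add_self hM i, ?_, ?_, hwrap⟩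
      · exact_mod_cast (by omega : d + 1 ≤ i + M)
      · exact_mod_cast (by omega : i + M + 1 ≤ a + M)
    · refine ⟨i, b + 1, c, rfl, by exact_mod_cast hbi, by exact_mod_cast hic, ?_⟩
      rw [← polyArc_add_self hM a]
      exact union_subset
        (polyArc_subset_polyArc (by exact_mod_cast (by omega : c ≤ a + M)) le_rfl)
        (polyArc_subset_polyArc le_rfl (by exact_mod_cast (by omega : d + 1 ≤ b + 1 + M)))
    · refine ⟨i, d + 1, a + M, rfl, by exact_mod_cast hdi, ?_, hwrap⟩
      exact_mod_cast (by omega : i + 1 ≤ a + M)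
  · intro hin
    have hp : unitCirclePt (2 * π / M * (i + 1 / 4)) ∈ polyArc M (i + 1 / 4) (i + 1 / 4) :=
      mem_image_of_mem _ ⟨le_rfl, le_rfl⟩
    have hcover : ∀ {x y : ℕ}, x ≤ i → i ≤ y → unitCirclePt (2 * π / M * (i + 1 / 4)) ∈
        polyArc M x (y + 1) := fun {x y} hx hy => by
      have hx : (x : ℝ) ≤ i := by exact_mod_cast hx
      have hy : (i : ℝ) ≤ y := by exact_mod_cast hy
      exact polyArc_subset_polyArc (by linarith) (by linarith) hp
    refine ⟨_, subset_convexHull ℝ _ (Or.inl hp), subset_convexHull ℝ _ ?_⟩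
    rcases hin with ⟨hai, hib⟩ | ⟨hci, hid⟩
    exacts [Or.inl (hcover hai hib), Or.inr (hcover hci hid)]

lemma eq_of_Icc_union_Icc_eq_Icc_union_Icc {a b c d a' b' c' d' : ℕ} (hbc : b + 1 < c)
    (hab' : a' ≤ b') (hbc' : b' + 1 < c') (hcd' : c' ≤ d')
    (h : Icc a b ∪ Icc c d = Icc a' b' ∪ Icc c' d') : a = a' ∧ b = b' ∧ c = c' ∧ d = d' := by
  have mem := fun i => congrArg (i ∈ ·) h
  simp only [mem_union, mem_Icc, eq_iff_iff] at mem
  -- besides the endpoints, the first points `b + 1` and `b' + 1` of the two gaps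
  have := mem a; have := mem b; have := mem c; have := mem d; have := mem (b + 1)
  have := mem a'; have := mem b'; have := mem c'; have := mem d'; have := mem (b' + 1)
  omega

lemma isCircleTrapezoidGraph_fromRel {n : ℕ} {S : Fin n → Set (ℝ × ℝ)}
    (hS : ∀ v, IsCircleTrapezoid (S v)) :
    IsCircleTrapezoidGraph (SimpleGraph.fromRel fun u v => (S u ∩ S v).Nonempty) :=
  ⟨S, hS, fun u v huv => by simp [huv, inter_comm]⟩

lemma card_le_numIsoClasses_mul_factorial (n : ℕ) (P : SimpleGraph (Fin n) → Prop) :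
    Nat.card {G // P G} ≤ numIsoClasses n P * n ! := by
  let cls : {G // P G} → Quotient (graphIsoSetoid n P) := Quotient.mk _
  let e : ∀ G, (cls G).out.val ≃g G.val := fun G =>
    Classical.choice (Quotient.mk_out (s := graphIsoSetoid n P) G)
  have he : ∀ G u v, G.val.Adj u v ↔
      (cls G).out.val.Adj ((e G).toEquiv.symm u) ((e G).toEquiv.symm v) :=
    fun G _ _ => (e G).symm.map_adj_iff.symm
  have hinj : Function.Injective fun G => (cls G, (e G).toEquiv) := by
    intro G H hGH
    obtain ⟨hclass, hequiv⟩ := Prod.mk.inj hGH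
    ext u v
    rw [he G, he H, hequiv, hclass]
  calc Nat.card {G // P G} ≤ Nat.card (Quotient (graphIsoSetoid n P) × Equiv.Perm (Fin n)) :=
        Nat.card_le_card_of_injective _ hinj
    _ = numIsoClasses n P * n ! := by
        rw [Nat.card_prod, Nat.card_perm, Nat.card_fin]; rfl

variable {Q : ℕ}

/-- A code `x` places the `k`-th endpoint index of a trapezoid in the `k`-th block of `Q`
consecutive sides of the `4 (Q + 1)`-gon; consecutive blocks are one side apart. -/
def codeEndpoint (x : Fin 4 → Fin Q) (k : Fin 4) : ℕ := (Q + 1) * k + x k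

def codeTrapezoid (x : Fin 4 → Fin Q) : Set (ℝ × ℝ) :=
  trapezoid (4 * (Q + 1)) (codeEndpoint x 0) (codeEndpoint x 1 + 1) (codeEndpoint x 2)
    (codeEndpoint x 3 + 1)

def coveredSides (x : Fin 4 → Fin Q) : Set ℕ :=
  Icc (codeEndpoint x 0) (codeEndpoint x 1) ∪ Icc (codeEndpoint x 2) (codeEndpoint x 3)

lemma codeEndpoint_bounds (x : Fin 4 → Fin Q) :
    codeEndpoint x 0 ≤ codeEndpoint x 1 ∧ codeEndpoint x 1 + 1 < codeEndpoint x 2 ∧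
      codeEndpoint x 2 ≤ codeEndpoint x 3 ∧ codeEndpoint x 3 + 1 < 4 * (Q + 1) := by
  have := (x 0).isLt; have := (x 1).isLt; have := (x 2).isLt; have := (x 3).isLt
  simp only [codeEndpoint, Fin.isValue, Fin.val_zero, Fin.val_one, Fin.val_two]
  omega

lemma codeEndpoint_injective : Function.Injective (codeEndpoint (Q := Q)) := by
  intro x y hxy
  funext k
  have := congrFun hxy k
  simp only [codeEndpoint] at this
  exact Fin.ext (by omega)

lemma isCircleTrapezoid_codeTrapezoid (x : Fin 4 → Fin Q) :
    IsCircleTrapezoid (codeTrapezoid x) := by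
  obtain ⟨h₀₁, h₁₂, h₂₃, h₃⟩ := codeEndpoint_bounds x
  refine isCircleTrapezoid_trapezoid (by positivity) ?_ ?_ ?_ ?_ <;> push_cast
  · exact_mod_cast h₀₁.trans (Nat.le_succ _)
  · exact_mod_cast h₁₂
  · exact_mod_cast h₂₃.trans (Nat.le_succ _)
  · exact_mod_cast h₃.trans_le (Nat.le_add_left _ _)

lemma probe_inter_codeTrapezoid_nonempty_iff (x : Fin 4 → Fin Q) {i : ℕ}
    (hi : i < 4 * (Q + 1)) :
    (probe (4 * (Q + 1)) i ∩ codeTrapezoid x).Nonempty ↔ i ∈ coveredSides x := by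
  obtain ⟨h₀₁, h₁₂, h₂₃, h₃⟩ := codeEndpoint_bounds x
  simpa only [codeTrapezoid, coveredSides, Nat.cast_add, Nat.cast_one] using
    probe_inter_trapezoid_nonempty_iff (by positivity) h₀₁ (by omega) h₂₃ (by omega) hi

def codeFamily (Q m : ℕ) (x : Fin m → Fin 4 → Fin Q) : Fin (4 * (Q + 1) + m) → Set (ℝ × ℝ) :=
  Fin.append (fun i => probe (4 * (Q + 1)) i) fun j => codeTrapezoid (x j)

def codeGraph (Q m : ℕ) (x : Fin m → Fin 4 → Fin Q) : SimpleGraph (Fin (4 * (Q + 1) + m)) :=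
  SimpleGraph.fromRel fun u v => (codeFamily Q m x u ∩ codeFamily Q m x v).Nonempty

lemma isCircleTrapezoidGraph_codeGraph {m : ℕ} (x : Fin m → Fin 4 → Fin Q) :
    IsCircleTrapezoidGraph (codeGraph Q m x) := by
  refine isCircleTrapezoidGraph_fromRel fun v => ?_
  refine Fin.addCases (fun i => ?_) (fun j => ?_) v
  · simpa only [codeFamily, Fin.append_left] using isCircleTrapezoid_probe (by positivity) _
  · simpa only [codeFamily, Fin.append_right] using isCircleTrapezoid_codeTrapezoid (x j)

lemma codeGraph_adj_iff {m : ℕ} (x : Fin m → Fin 4 → Fin Q) (i : Fin (4 * (Q + 1)))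
    (j : Fin m) :
    (codeGraph Q m x).Adj (Fin.castAdd m i) (Fin.natAdd _ j) ↔ (i : ℕ) ∈ coveredSides (x j) := by
  have hne : Fin.castAdd m i ≠ Fin.natAdd _ j := Fin.ne_of_val_ne (by simp; omega)
  rw [← probe_inter_codeTrapezoid_nonempty_iff (x j) i.isLt]
  simp [codeGraph, codeFamily, SimpleGraph.fromRel_adj, hne, inter_comm]

lemma codeGraph_injective (m : ℕ) : Function.Injective (codeGraph Q m) := by
  intro x y hxy
  funext j
  apply codeEndpoint_injective
  have hsets : coveredSides (x j) = coveredSides (y j) := by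
    ext i
    by_cases hi : i < 4 * (Q + 1)
    · rw [← codeGraph_adj_iff x ⟨i, hi⟩, ← codeGraph_adj_iff y ⟨i, hi⟩, hxy]
    · have := codeEndpoint_bounds (x j); have := codeEndpoint_bounds (y j)
      simp only [coveredSides, mem_union, mem_Icc]
      omega
  obtain ⟨-, hx₁₂, -, -⟩ := codeEndpoint_bounds (x j)
  obtain ⟨hy₀₁, hy₁₂, hy₂₃, -⟩ := codeEndpoint_bounds (y j)
  obtain ⟨h₀, h₁, h₂, h₃⟩ := eq_of_Icc_union_Icc_eq_Icc_union_Icc hx₁₂ hy₀₁ hy₁₂ hy₂₃ hsets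
  funext k
  fin_cases k <;> assumption

theorem pow_le_numIsoClasses_mul_factorial (Q m : ℕ) :
    (Q ^ 4) ^ m ≤ numIsoClasses (4 * (Q + 1) + m) IsCircleTrapezoidGraph * (4 * (Q + 1) + m)! :=
  calc (Q ^ 4) ^ m = Nat.card (Fin m → Fin 4 → Fin Q) := by simp
    _ ≤ Nat.card {G : SimpleGraph (Fin (4 * (Q + 1) + m)) // IsCircleTrapezoidGraph G} :=
      Nat.card_le_card_of_injective
        (fun x => ⟨codeGraph Q m x, isCircleTrapezoidGraph_codeGraph x⟩)
        fun _ _ h => codeGraph_injective m (congrArg Subtype.val h)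
    _ ≤ _ := card_le_numIsoClasses_mul_factorial _ _

lemma logb_two_le_half_self {x : ℝ} (hx : 36 ≤ x) : logb 2 x ≤ x / 2 := by
  have hx0 : 0 < x := by linarith
  have hs : 6 ≤ √x := Real.le_sqrt_of_sq_le (by linarith)
  have hlog : log x ≤ 2 * √x := by
    have := log_le_sub_one_of_pos (sqrt_pos.2 hx0)
    rw [log_sqrt hx0.le] at this
    linarith
  have hlog2 : 2 / 3 < log 2 := by linarith [log_two_gt_d9]
  calc logb 2 x = log x / log 2 := rfl
    _ ≤ 2 * √x / (2 / 3) := by gcongr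
    _ = 3 * √x := by ring
    _ ≤ √x * √x / 2 := by nlinarith
    _ = x / 2 := by rw [mul_self_sqrt hx0.le]

lemma logb_floor_div_logb_ge {x : ℝ} (hx : 0 < logb 2 x) (hx' : logb 2 x ≤ x / 2) :
    logb 2 x - 1 - logb 2 (logb 2 x) ≤ logb 2 ⌊x / logb 2 x⌋₊ := by
  set L := logb 2 x
  have hx0 : 0 < x := by linarith
  have hfloor : x / (2 * L) ≤ ⌊x / L⌋₊ := by
    have h1 := Nat.lt_floor_add_one (x / L)
    have h2 : 1 ≤ x / (2 * L) := by rw [le_div_iff₀ (by positivity)]; linarith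
    have h3 : x / L = 2 * (x / (2 * L)) := by field_simp
    linarith
  calc L - 1 - logb 2 L = logb 2 (x / (2 * L)) := by
        rw [logb_div hx0.ne' (by positivity), logb_mul two_ne_zero hx.ne',
          logb_self_eq_one one_lt_two]
        ring
    _ ≤ logb 2 ⌊x / L⌋₊ := logb_le_logb_of_le one_lt_two (by positivity) hfloor

lemma mul_logb_le_of_pow_le_mul_factorial {K m T n : ℕ} (hK : 0 < K) (h : K ^ m ≤ T * n !) :
    m * logb 2 K ≤ logb 2 T + n * logb 2 n := by
  have hT : T ≠ 0 := by
    rintro rfl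
    simpa using (Nat.one_le_pow m K hK).trans h
  have hfac : (n ! : ℝ) ≤ (n : ℝ) ^ n := by exact_mod_cast Nat.factorial_le_pow n
  calc m * logb 2 K = logb 2 ((K : ℝ) ^ m) := (logb_pow _ _ _).symm
    _ ≤ logb 2 ((T : ℝ) * n !) :=
        logb_le_logb_of_le one_lt_two (by positivity) (by exact_mod_cast h)
    _ = logb 2 T + logb 2 (n ! : ℝ) := logb_mul (by exact_mod_cast hT) (by positivity)
    _ ≤ logb 2 T + logb 2 ((n : ℝ) ^ n) := by gcongr; norm_num
    _ = logb 2 T + n * logb 2 n := by rw [logb_pow]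

end CircleTrapezoid

open CircleTrapezoid

/-- There is a constant `c > 0` such that for all sufficiently large `n`, the number `T_n` of
isomorphism classes of circle-trapezoid graphs on `n` vertices satisfies
`log₂ T_n ≥ 3 n log₂ n − c n log₂ log₂ n`. -/
theorem stmt2 :
    ∃ c : ℝ, 0 < c ∧ ∃ n₀ : ℕ, ∀ n : ℕ, n₀ ≤ n →
      Real.logb 2 (numIsoClasses n IsCircleTrapezoidGraph) ≥
        3 * (n : ℝ) * Real.logb 2 n - c * n * Real.logb 2 (Real.logb 2 n) := by
  refine ⟨32, by norm_num, 256, fun n hn => ?_⟩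
  set L := logb 2 (n : ℝ)
  have hL : 8 ≤ L := (le_logb_iff_rpow_le one_lt_two (by positivity)).2 (by norm_num; exact hn)
  have hLn : L ≤ n / 2 := logb_two_le_half_self (by exact_mod_cast (by omega : 36 ≤ n))
  set Q := ⌊(n : ℝ) / L⌋₊
  have hQL : (Q : ℝ) * L ≤ n := (le_div_iff₀ (by positivity)).1 (Nat.floor_le (by positivity))
  have hlogQ : L - 1 - logb 2 L ≤ logb 2 Q := logb_floor_div_logb_ge (by linarith) hLn
  obtain ⟨m, hm⟩ : ∃ m, n = 4 * (Q + 1) + m := Nat.exists_eq_add_of_le (by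
    have : (4 * (Q + 1) : ℝ) ≤ n := by nlinarith
    exact_mod_cast this)
  have hcount := pow_le_numIsoClasses_mul_factorial Q m
  rw [← hm] at hcount
  have hQ : 0 < Q := Nat.floor_pos.2 ((one_le_div (by positivity)).2 (by linarith))
  have hlog : (m : ℝ) * logb 2 (Q ^ 4 : ℕ) ≤
      logb 2 (numIsoClasses n IsCircleTrapezoidGraph) + n * L :=
    mul_logb_le_of_pow_le_mul_factorial (pow_pos hQ 4) hcount
  have hm' : (m : ℝ) = n - 4 * (Q + 1) := by rw [hm]; push_cast; ring
  rw [Nat.cast_pow, logb_pow, hm', Nat.cast_ofNat] at hlog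
  have hlogQ' : logb 2 Q ≤ L := logb_le_logb_of_le one_lt_two (by positivity) (by nlinarith)
  have hloglog : 1 ≤ logb 2 L :=
    (le_logb_iff_rpow_le one_lt_two (by positivity)).2 (by norm_num; linarith)
  have h₁ : 4 * n * (L - 1 - logb 2 L) ≤ 4 * n * logb 2 Q := by gcongr
  have h₂ : (Q + 1) * logb 2 Q ≤ (Q + 1) * L := by gcongr
  have h₃ : (n : ℝ) ≤ n * logb 2 L := le_mul_of_one_le_right (by positivity) hloglog
  linarith
end

section
/- There exist a constant c > 0 and a threshold n₀ such that for all n ≥ n₀, the number A_n of isomorphism classes of circular-arc graphs on n vertices satisfies log₂ A_n ≥ n·log₂ n − c·n·log₂ log₂ n. -/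
/-- `G` is a circular-arc graph: an intersection graph of closed arcs of the unit circle. -/
def IsCircularArcGraph {n : ℕ} (G : SimpleGraph (Fin n)) : Prop :=
  ∃ A : Fin n → Set (ℝ × ℝ), (∀ v, IsClosedArc (A v)) ∧
    ∀ u v : Fin n, u ≠ v → (G.Adj u v ↔ (A u ∩ A v).Nonempty)
open Real Set
open scoped Nat

/-!
Take `2k` point intervals `{0}, …, {2k - 1}` ("markers") and `m = n - 2k` intervals `[a, k + b]`
with `a, b < k` ("choosers"). In the resulting interval graph the pair `(a, b)` of a chooser is
recovered as the least and greatest marker it meets, so the `k ^ (2m)` choices give distinct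
labelled graphs on `Fin n`, all circular-arc graphs. An isomorphism class contains at most `n!`
labelled graphs, hence `A_n ≥ k ^ (2m) / n!`, and `k ≈ n / log₂ n` gives
`log₂ A_n ≥ n log₂ n - 2n log₂ log₂ n - 6n`.
-/

lemma injOn_unitCirclePt : InjOn unitCirclePt (Ioo (-π) π) := by
  intro x hx y hy h
  have hcos : cos (x - y) = 1 := by
    have hc : cos x = cos y := congrArg Prod.fst h
    have hs : sin x = sin y := congrArg Prod.snd h
    rw [cos_sub, hc, hs, ← sq, ← sq, cos_sq_add_sin_sq]
  have hxy := (cos_eq_one_iff_of_lt_of_lt (by linarith [hx.1, hy.2])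
    (by linarith [hx.2, hy.1])).1 hcos
  linarith

lemma StrictMono.Icc_inter_Icc_nonempty_iff {α β : Type*} [LinearOrder α] [LinearOrder β]
    {f : α → β} (hf : StrictMono f) {a b c d : α} :
    (Icc (f a) (f b) ∩ Icc (f c) (f d)).Nonempty ↔ (Icc a b ∩ Icc c d).Nonempty := by
  simp only [Icc_inter_Icc, nonempty_Icc, ← hf.monotone.map_max, ← hf.monotone.map_min,
    hf.le_iff_le]

def intervalGraph {V α : Type*} [LinearOrder α] (l r : V → α) : SimpleGraph V where
  Adj u v := u ≠ v ∧ (Icc (l u) (r u) ∩ Icc (l v) (r v)).Nonempty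
  symm := ⟨fun _ _ h => ⟨h.1.symm, by rw [inter_comm]; exact h.2⟩⟩
  loopless := ⟨fun _ h => h.1 rfl⟩

section IntervalGraph

variable {V α β : Type*} [LinearOrder α] [LinearOrder β]

@[simp]
lemma intervalGraph_adj {l r : V → α} {u v : V} :
    (intervalGraph l r).Adj u v ↔ u ≠ v ∧ (Icc (l u) (r u) ∩ Icc (l v) (r v)).Nonempty :=
  Iff.rfl

lemma intervalGraph_comp_strictMono {f : α → β} (hf : StrictMono f) (l r : V → α) :
    intervalGraph (f ∘ l) (f ∘ r) = intervalGraph l r := by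
  ext u v
  simp only [intervalGraph_adj, Function.comp_apply, hf.Icc_inter_Icc_nonempty_iff]

end IntervalGraph

/-- `arctan` squeezes the line into an arc of length `π`, on which `unitCirclePt` is injective. -/
lemma isCircularArcGraph_intervalGraph {n : ℕ} {l r : Fin n → ℝ} (hlr : ∀ v, l v ≤ r v) :
    IsCircularArcGraph (intervalGraph l r) := by
  rw [← intervalGraph_comp_strictMono arctan_strictMono]
  have hsub (v : Fin n) : Icc (arctan (l v)) (arctan (r v)) ⊆ Ioo (-π) π := fun x hx =>
    ⟨by linarith [hx.1, neg_pi_div_two_lt_arctan (l v), pi_pos],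
      by linarith [hx.2, arctan_lt_pi_div_two (r v), pi_pos]⟩
  refine ⟨fun v => unitCirclePt '' Icc (arctan (l v)) (arctan (r v)),
    fun v => ⟨_, _, arctan_mono (hlr v), ?_, rfl⟩, fun u v huv => ?_⟩
  · linarith [neg_pi_div_two_lt_arctan (l v), arctan_lt_pi_div_two (r v), pi_pos]
  · rw [← injOn_unitCirclePt.image_inter (hsub u) (hsub v), image_nonempty]
    simp [huv]

lemma card_le_numIsoClasses_mul_factorial {n : ℕ} {P : SimpleGraph (Fin n) → Prop} {I : Type*}
    {G : I → SimpleGraph (Fin n)} (hG : Function.Injective G) (hP : ∀ i, P (G i)) :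
    Nat.card I ≤ numIsoClasses n P * n ! := by
  classical
  let q (i : I) : Quotient (graphIsoSetoid n P) := ⟦⟨G i, hP i⟩⟧
  have e (i : I) : G i ≃g (q i).out.val := (Quotient.exact (Quotient.out_eq (q i)).symm).some
  have hinj : Function.Injective fun i => (q i, (e i).toEquiv) := by
    intro i j hij
    obtain ⟨hq, he⟩ := Prod.mk.inj hij
    have he' : (e i : Fin n → Fin n) = e j := congrArg DFunLike.coe he
    apply hG
    rw [← (e i).toEmbedding.comap_eq, ← (e j).toEmbedding.comap_eq]
    change (q i).out.val.comap (e i) = (q j).out.val.comap (e j)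
    rw [he', hq]
  simpa only [numIsoClasses, Nat.card_prod, Nat.card_perm, Nat.card_fin] using
    Nat.card_le_card_of_injective _ hinj

section Encoding

variable {V : Type*} {k m : ℕ}

noncomputable def codeLeft (F : Fin m → Fin k × Fin k) : Fin (2 * k) ⊕ Fin m → ℝ
  | .inl u => u
  | .inr j => (F j).1

noncomputable def codeRight (F : Fin m → Fin k × Fin k) : Fin (2 * k) ⊕ Fin m → ℝ
  | .inl u => u
  | .inr j => k + (F j).2

noncomputable def codeGraph (e : V ≃ Fin (2 * k) ⊕ Fin m) (F : Fin m → Fin k × Fin k) :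
    SimpleGraph V :=
  intervalGraph (codeLeft F ∘ e) (codeRight F ∘ e)

lemma codeGraph_adj (e : V ≃ Fin (2 * k) ⊕ Fin m) (F : Fin m → Fin k × Fin k)
    (j : Fin m) (u : Fin (2 * k)) :
    (codeGraph e F).Adj (e.symm (.inr j)) (e.symm (.inl u)) ↔
      (F j).1 ≤ (u : ℕ) ∧ (u : ℕ) ≤ k + (F j).2 := by
  simp only [codeGraph, intervalGraph_adj, Function.comp_apply, Equiv.apply_symm_apply,
    codeLeft, codeRight, Icc_self, inter_singleton_nonempty, mem_Icc]
  norm_cast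
  simp

lemma codeGraph_injective (e : V ≃ Fin (2 * k) ⊕ Fin m) : Function.Injective (codeGraph e) := by
  intro F F' h
  funext j
  have key (u : ℕ) (hu : u < 2 * k) :
      (F j).1 ≤ u ∧ u ≤ k + (F j).2 ↔ (F' j).1 ≤ u ∧ u ≤ k + (F' j).2 := by
    rw [← codeGraph_adj e F j ⟨u, hu⟩, ← codeGraph_adj e F' j ⟨u, hu⟩, h]
  have ha := (F j).1.isLt
  have hb := (F j).2.isLt
  have ha' := (F' j).1.isLt
  have hb' := (F' j).2.isLt
  have h₁ := key (F j).1 (by omega)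
  have h₂ := key (F' j).1 (by omega)
  have h₃ := key (k + (F j).2) (by omega)
  have h₄ := key (k + (F' j).2) (by omega)
  exact Prod.ext (Fin.ext (by omega)) (Fin.ext (by omega))

lemma isCircularArcGraph_codeGraph {n : ℕ} (e : Fin n ≃ Fin (2 * k) ⊕ Fin m)
    (F : Fin m → Fin k × Fin k) : IsCircularArcGraph (codeGraph e F) := by
  have hlr : ∀ w, codeLeft F w ≤ codeRight F w
    | .inl _ => le_rfl
    | .inr j => by
      have : ((F j).1 : ℝ) < k := by exact_mod_cast (F j).1.isLt
      simp only [codeLeft, codeRight]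
      linarith [(Nat.cast_nonneg (F j).2 : (0 : ℝ) ≤ (F j).2)]
  exact isCircularArcGraph_intervalGraph fun v => hlr (e v)

end Encoding

lemma pow_le_numIsoClasses_mul_factorial {n k : ℕ} (hkn : 2 * k ≤ n) :
    (k * k) ^ (n - 2 * k) ≤ numIsoClasses n IsCircularArcGraph * n ! := by
  let e : Fin n ≃ Fin (2 * k) ⊕ Fin (n - 2 * k) := (finCongr (by omega)).trans finSumFinEquiv.symm
  simpa using card_le_numIsoClasses_mul_factorial (codeGraph_injective e)
    (isCircularArcGraph_codeGraph e)

lemma logb_numIsoClasses_ge_of_le {n k : ℕ} (hk : 1 ≤ k) (hkn : 2 * k ≤ n) :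
    2 * (n - 2 * k : ℝ) * logb 2 k - n * logb 2 n ≤
      logb 2 (numIsoClasses n IsCircularArcGraph) := by
  have hbound : ((k : ℝ) * k) ^ (n - 2 * k) ≤ numIsoClasses n IsCircularArcGraph * (n ! : ℝ) := by
    exact_mod_cast pow_le_numIsoClasses_mul_factorial hkn
  have hk₀ : (0 : ℝ) < k := by exact_mod_cast hk
  have hpos : 0 < ((k : ℝ) * k) ^ (n - 2 * k) := by positivity
  have hA : (0 : ℝ) < numIsoClasses n IsCircularArcGraph :=
    pos_of_mul_pos_left (hpos.trans_le hbound) (Nat.cast_nonneg _)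
  have hfact : logb 2 (n ! : ℝ) ≤ n * logb 2 n := by
    rw [← logb_pow]
    exact logb_le_logb_of_le one_lt_two (by positivity) (by exact_mod_cast n.factorial_le_pow)
  have := logb_le_logb_of_le one_lt_two hpos hbound
  rw [logb_pow, logb_mul hk₀.ne' hk₀.ne', logb_mul hA.ne' (by positivity), Nat.cast_sub hkn] at this
  push_cast at this
  linarith

lemma two_le_logb_two {n : ℕ} (hn : 4 ≤ n) : 2 ≤ logb 2 (n : ℝ) := by
  rw [le_logb_iff_rpow_le one_lt_two (by positivity)]
  norm_num
  exact_mod_cast hn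

lemma two_mul_logb_two_le {n : ℕ} (hn : 4 ≤ n) : 2 * logb 2 (n : ℝ) ≤ n := by
  have hsq : n ^ 2 ≤ 2 ^ n := by
    induction n, hn using Nat.le_induction with
    | base => norm_num
    | succ n hn ih =>
      calc (n + 1) ^ 2 ≤ 2 * n ^ 2 := by nlinarith
        _ ≤ 2 ^ (n + 1) := by rw [pow_succ 2 n]; omega
  calc 2 * logb 2 (n : ℝ) = logb 2 ((n : ℝ) ^ 2) := by rw [logb_pow]; norm_num
    _ ≤ logb 2 ((2 : ℝ) ^ n) :=
      logb_le_logb_of_le one_lt_two (by positivity) (by exact_mod_cast hsq)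
    _ = n := by rw [logb_pow, logb_self_eq_one one_lt_two, mul_one]

lemma logb_numIsoClasses_ge {n : ℕ} (hn : 4 ≤ n) :
    n * logb 2 n - 2 * n * logb 2 (logb 2 n) - 6 * n ≤
      logb 2 (numIsoClasses n IsCircularArcGraph) := by
  set X := logb 2 (n : ℝ)
  have hX : 2 ≤ X := two_le_logb_two hn
  have hnX : 2 * X ≤ n := two_mul_logb_two_le hn
  have hn₀ : (0 : ℝ) < n := by positivity
  have hratio : 1 ≤ n / (2 * X) := by rw [le_div_iff₀ (by positivity)]; linarith
  set k := ⌊n / X⌋₊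
  have hk_le : (k : ℝ) ≤ n / X := Nat.floor_le (by positivity)
  have hk_ge : n / (2 * X) ≤ k := by
    have := Nat.lt_floor_add_one (n / X)
    have : n / X = 2 * (n / (2 * X)) := by field_simp
    linarith
  have hk : 1 ≤ k := by exact_mod_cast hratio.trans hk_ge
  have hkn : 2 * k ≤ n := by
    have : 2 * (n / X) ≤ n := by rw [← mul_div_assoc, div_le_iff₀ (by positivity)]; nlinarith
    exact_mod_cast (by linarith : (2 * k : ℝ) ≤ n)
  have hlog_ratio : logb 2 (n / (2 * X)) = X - 1 - logb 2 X := by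
    rw [logb_div hn₀.ne' (by positivity), logb_mul two_ne_zero (by positivity),
      logb_self_eq_one one_lt_two]
    ring
  have hlogk : X - 1 - logb 2 X ≤ logb 2 k :=
    hlog_ratio ▸ logb_le_logb_of_le one_lt_two (by positivity) hk_ge
  have hlogk₀ : 0 ≤ X - 1 - logb 2 X := hlog_ratio ▸ logb_nonneg one_lt_two hratio
  have hm : n - 2 * n / X ≤ (n - 2 * k : ℝ) := by linarith [mul_div_assoc 2 (n : ℝ) X]
  have hprod := mul_le_mul hm hlogk hlogk₀ (sub_nonneg.2 (by exact_mod_cast hkn))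
  have hsimp : 2 * (n - 2 * n / X) * (X - 1 - logb 2 X) - n * X =
      n * X - 2 * n * logb 2 X - 6 * n + 4 * n * (1 + logb 2 X) / X := by
    field_simp
    ring
  have hY : 0 ≤ logb 2 X := logb_nonneg one_lt_two (by linarith)
  have : 0 ≤ 4 * n * (1 + logb 2 X) / X := by positivity
  linarith [logb_numIsoClasses_ge_of_le hk hkn]

/-- There is a constant `c > 0` such that for all sufficiently large `n`, the number `A_n` of
isomorphism classes of circular-arc graphs on `n` vertices satisfies
`log₂ A_n ≥ n log₂ n − c n log₂ log₂ n`. -/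
theorem stmt3 :
    ∃ c : ℝ, 0 < c ∧ ∃ n₀ : ℕ, ∀ n : ℕ, n₀ ≤ n →
      Real.logb 2 (numIsoClasses n IsCircularArcGraph) ≥
        (n : ℝ) * Real.logb 2 n - c * n * Real.logb 2 (Real.logb 2 n) := by
  refine ⟨8, by norm_num, 4, fun n hn => ?_⟩
  have hY : 1 ≤ logb 2 (logb 2 (n : ℝ)) := by
    rw [le_logb_iff_rpow_le one_lt_two (by linarith [two_le_logb_two hn]), rpow_one]
    exact two_le_logb_two hn
  have h6 : 6 * (n : ℝ) ≤ 6 * n * logb 2 (logb 2 n) := le_mul_of_one_le_right (by positivity) hY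
  linarith [logb_numIsoClasses_ge hn]
end

section
/- Let k and ℓ be positive integers and N = k·ℓ. The number of permutations σ of Fin N for which there exist i, j ∈ Fin k and a 3-element subset T of the block B_i with σ '' T ⊆ B_j is at most k² · (ℓ choose 3)² · 6 · (N − 3)!. -/
/-! A bad permutation is witnessed by a pair of blocks `(B_i, B_j)` and a triple `T ⊆ B_i` with
`σ '' T ⊆ B_j`; take a union bound over these `k² · (ℓ choose 3)` witnesses. For a fixed witness,
`σ` restricts to an embedding `T ↪ B_j` (at most `ℓ · (ℓ - 1) · (ℓ - 2) = 6 · (ℓ choose 3)` of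
them), and the permutations with a given restriction form a coset of the pointwise stabiliser of
`T`, which has `(N - 3)!` elements. -/

open Finset

namespace Equiv.Perm

variable {α : Type*} [Fintype α] [DecidableEq α]

theorem card_fixing_finset (T : Finset α) :
    #{σ : Perm α | ∀ x ∈ T, σ x = x} = (Fintype.card α - #T).factorial := by
  rw [← Fintype.card_subtype, ← Fintype.card_coe T, ← Fintype.card_subtype_compl,
    ← Fintype.card_perm]
  exact Fintype.card_congr <| (Equiv.subtypeEquivRight fun σ => by simp).trans
    (Perm.subtypeEquivSubtypePerm (· ∉ T)).symm

theorem card_eqOn_finset (T : Finset α) (σ₀ : Perm α) :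
    #{σ : Perm α | ∀ x ∈ T, σ x = σ₀ x} = (Fintype.card α - #T).factorial := by
  rw [← card_fixing_finset T]
  exact card_bij' (fun σ _ => σ₀⁻¹ * σ) (fun σ _ => σ₀ * σ) (by simp +contextual)
    (by simp +contextual) (by simp) (by simp)

theorem card_mapsTo_finset_le (T S : Finset α) :
    #{σ : Perm α | ∀ x ∈ T, σ x ∈ S} ≤ (#S).descFactorial #T * (Fintype.card α - #T).factorial := by
  let restrict : Perm α → (T ↪ α) := fun σ => (Function.Embedding.subtype _).trans σ.toEmbedding
  let embS : Finset (T ↪ α) :=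
    univ.image fun e : T ↪ S => e.trans (Function.Embedding.subtype _)
  have hcard_embS : #embS ≤ (#S).descFactorial #T := by
    simpa [Fintype.card_embedding_eq] using card_image_le (s := (univ : Finset (T ↪ S)))
  rw [mul_comm]
  refine card_le_mul_card_image_of_maps_to (f := restrict) (t := embS) ?_ _ ?_ |>.trans
    (Nat.mul_le_mul_left _ hcard_embS)
  · intro σ hσ
    simp only [mem_filter, mem_univ, true_and] at hσ
    exact mem_image.2 ⟨Function.Embedding.codRestrict (S : Set α) (restrict σ) fun t => hσ t t.2,
      mem_univ _, rfl⟩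
  · intro e _
    obtain h | ⟨σ₀, hσ₀⟩ := ({σ ∈ {σ : Perm α | ∀ x ∈ T, σ x ∈ S} | restrict σ = e} :
      Finset (Perm α)).eq_empty_or_nonempty
    · simp [h]
    refine le_of_le_of_eq (card_le_card fun σ hσ => ?_) (card_eqOn_finset T σ₀)
    simp only [mem_filter, mem_univ, true_and] at hσ hσ₀ ⊢
    intro x hx
    exact (DFunLike.congr_fun hσ.2 ⟨x, hx⟩).trans (DFunLike.congr_fun hσ₀.2 ⟨x, hx⟩).symm

theorem card_exists_mapsTo_le {ι : Type*} [Fintype ι] (B : ι → Finset α) (ℓ m : ℕ)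
    (hB : ∀ i, #(B i) = ℓ) :
    Nat.card {σ : Perm α //
        ∃ i j, ∃ T : Finset α, #T = m ∧ T ⊆ B i ∧ ∀ x ∈ T, σ x ∈ B j} ≤
      Fintype.card ι ^ 2 * ℓ.choose m ^ 2 * m.factorial * (Fintype.card α - m).factorial := by
  let cover : Finset (Perm α) := (univ : Finset (ι × ι)).biUnion fun p =>
    (powersetCard m (B p.1)).biUnion fun T => {σ | ∀ x ∈ T, σ x ∈ B p.2}
  have hmaps : ∀ p : ι × ι, ∀ T ∈ powersetCard m (B p.1),
      #{σ : Perm α | ∀ x ∈ T, σ x ∈ B p.2} ≤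
        ℓ.descFactorial m * (Fintype.card α - m).factorial := by
    intro p T hT
    rw [← (mem_powersetCard.1 hT).2, ← hB p.2]
    exact card_mapsTo_finset_le T (B p.2)
  have hcover : #cover ≤
      Fintype.card ι ^ 2 * ℓ.choose m ^ 2 * m.factorial * (Fintype.card α - m).factorial :=
    calc #cover ≤ #(univ : Finset (ι × ι)) *
          (ℓ.choose m * (ℓ.descFactorial m * (Fintype.card α - m).factorial)) :=
          card_biUnion_le_card_mul _ _ _ fun p _ => by
            simpa [hB] using card_biUnion_le_card_mul _ _ _ (hmaps p)
      _ = _ := by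
          rw [card_univ, Fintype.card_prod, Nat.descFactorial_eq_factorial_mul_choose]
          ring
  have hsub : {σ : Perm α | ∃ i j, ∃ T : Finset α, #T = m ∧ T ⊆ B i ∧
      ∀ x ∈ T, σ x ∈ B j} ⊆ cover := by
    rintro σ ⟨i, j, T, hT, hTi, hTj⟩
    exact mem_biUnion.2 ⟨(i, j), mem_univ _,
      mem_biUnion.2 ⟨T, mem_powersetCard.2 ⟨hTi, hT⟩, mem_filter.2 ⟨mem_univ _, hTj⟩⟩⟩
  calc _ ≤ Nat.card cover := Nat.card_mono cover.finite_toSet hsub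
    _ = #cover := Nat.card_eq_finsetCard cover
    _ ≤ _ := hcover

end Equiv.Perm

def block (k ℓ : ℕ) (i : Fin k) : Finset (Fin (k * ℓ)) :=
  {x | (i : ℕ) * ℓ ≤ x ∧ (x : ℕ) < (i + 1) * ℓ}

theorem mem_block {k ℓ : ℕ} {i : Fin k} {x : Fin (k * ℓ)} :
    x ∈ block k ℓ i ↔ (i : ℕ) * ℓ ≤ x ∧ (x : ℕ) < (i + 1) * ℓ := by
  simp [block]

theorem card_block (k ℓ : ℕ) (i : Fin k) : #(block k ℓ i) = ℓ := by
  have hmap : (block k ℓ i).map Fin.valEmbedding = Ico (i * ℓ) ((i + 1) * ℓ) := by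
    ext n
    simp only [mem_map, mem_block, Fin.valEmbedding_apply, mem_Ico]
    constructor
    · rintro ⟨x, hx, rfl⟩
      exact hx
    · intro hn
      have : (i + 1) * ℓ ≤ k * ℓ := Nat.mul_le_mul_right ℓ i.2
      exact ⟨⟨n, by omega⟩, hn, rfl⟩
  rw [← card_map Fin.valEmbedding, hmap, Nat.card_Ico, add_mul, one_mul, Nat.add_sub_cancel_left]

theorem stmt5_general (k ℓ : ℕ) :
    Nat.card {σ : Equiv.Perm (Fin (k * ℓ)) //
        ∃ i j : Fin k, ∃ T : Finset (Fin (k * ℓ)), T.card = 3 ∧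
          (∀ x ∈ T, (i : ℕ) * ℓ ≤ (x : ℕ) ∧ (x : ℕ) < ((i : ℕ) + 1) * ℓ) ∧
          (∀ x ∈ T, (j : ℕ) * ℓ ≤ (σ x : ℕ) ∧ (σ x : ℕ) < ((j : ℕ) + 1) * ℓ)} ≤
      k ^ 2 * (ℓ.choose 3) ^ 2 * 6 * (k * ℓ - 3).factorial := by
  have h := Equiv.Perm.card_exists_mapsTo_le (block k ℓ) ℓ 3 (card_block k ℓ)
  simpa only [subset_iff, mem_block, Fintype.card_fin, show Nat.factorial 3 = 6 from rfl] using h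

/-- The number of "bad" permutations of `Fin (k·ℓ)` — those mapping some 3-element subset of a
block `B_i = {x | i·ℓ ≤ x < (i+1)·ℓ}` into a block `B_j` — is at most
`k² · (ℓ choose 3)² · 6 · (k·ℓ − 3)!`. -/
theorem stmt5 (k ℓ : ℕ) (hk : 0 < k) (hℓ : 0 < ℓ) :
    Nat.card {σ : Equiv.Perm (Fin (k * ℓ)) //
        ∃ i j : Fin k, ∃ T : Finset (Fin (k * ℓ)), T.card = 3 ∧
          (∀ x ∈ T, (i : ℕ) * ℓ ≤ (x : ℕ) ∧ (x : ℕ) < ((i : ℕ) + 1) * ℓ) ∧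
          (∀ x ∈ T, (j : ℕ) * ℓ ≤ (σ x : ℕ) ∧ (σ x : ℕ) < ((j : ℕ) + 1) * ℓ)} ≤
      k ^ 2 * (ℓ.choose 3) ^ 2 * 6 * (k * ℓ - 3).factorial :=
  stmt5_general k ℓ
end

section
/- Let θ₁ < θ₂ < θ₃ < θ₄ be real numbers with θ₄ − θ₁ < 2π, and let p_i = (cos θ_i, sin θ_i) ∈ ℝ² for i = 1, 2, 3, 4. Then: (i) the chords with interleaved endpoints intersect, i.e., segment ℝ p₁ p₃ ∩ segment ℝ p₂ p₄ is nonempty; and (ii) the chords with non-interleaved endpoints are disjoint, i.e., segment ℝ p₁ p₂ ∩ segment ℝ p₃ p₄ = ∅. -/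
open Real

/-- Cross product functional: twice the signed area of triangle `a b p`. -/
noncomputable def crossF (a b p : ℝ × ℝ) : ℝ :=
  (b.1 - a.1) * (p.2 - a.2) - (b.2 - a.2) * (p.1 - a.1)

lemma sin_half (x : ℝ) : Real.sin x = 2 * Real.sin (x/2) * Real.cos (x/2) := by
  have := Real.sin_two_mul (x/2)
  rw [show 2 * (x/2) = x by ring] at this
  linarith

lemma cos_half (x : ℝ) : Real.cos x = 1 - 2 * Real.sin (x/2)^2 := by
  have h := Real.cos_two_mul (x/2)
  rw [show 2 * (x/2) = x by ring] at h
  have h2 := Real.sin_sq_add_cos_sq (x/2)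
  linarith

lemma crossF_trig (α β θ : ℝ) :
    crossF (Real.cos α, Real.sin α) (Real.cos β, Real.sin β) (Real.cos θ, Real.sin θ)
      = 4 * Real.sin ((θ-β)/2) * Real.sin ((β-α)/2) * Real.sin ((θ-α)/2) := by
  simp only [crossF]
  rw [cos_half α, cos_half β, cos_half θ, sin_half α, sin_half β, sin_half θ,
    show (θ-β)/2 = θ/2 - β/2 by ring, show (β-α)/2 = β/2 - α/2 by ring,
    show (θ-α)/2 = θ/2 - α/2 by ring, Real.sin_sub, Real.sin_sub, Real.sin_sub]
  linear_combination
    (-4*Real.sin (β/2)*Real.cos (β/2)*Real.sin (θ/2)^2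
      + 4*Real.sin (β/2)^2*Real.sin (θ/2)*Real.cos (θ/2)) * (Real.sin_sq_add_cos_sq (α/2)) +
    (4*Real.sin (α/2)*Real.cos (α/2)*Real.sin (θ/2)^2
      - 4*Real.sin (α/2)^2*Real.sin (θ/2)*Real.cos (θ/2)) * (Real.sin_sq_add_cos_sq (β/2)) +
    (-4*Real.sin (α/2)*Real.cos (α/2)*Real.sin (β/2)^2
      + 4*Real.sin (α/2)^2*Real.sin (β/2)*Real.cos (β/2)) * (Real.sin_sq_add_cos_sq (θ/2))

lemma crossF_combo (a b p q : ℝ × ℝ) (u v : ℝ) (h : u + v = 1) :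
    crossF a b (u • p + v • q) = u * crossF a b p + v * crossF a b q := by
  have hv : v = 1 - u := by linarith
  subst hv
  simp only [crossF, Prod.fst_add, Prod.snd_add, Prod.smul_fst, Prod.smul_snd, smul_eq_mul]
  ring

lemma crossF_mem_segment {a b p q x : ℝ × ℝ} (hx : x ∈ segment ℝ p q) :
    ∃ u v : ℝ, 0 ≤ u ∧ 0 ≤ v ∧ u + v = 1 ∧
      crossF a b x = u * crossF a b p + v * crossF a b q := by
  obtain ⟨u, v, hu, hv, huv, rfl⟩ := hx
  exact ⟨u, v, hu, hv, huv, crossF_combo a b p q u v huv⟩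

set_option maxHeartbeats 1000000 in
/-- For four points `p₁, p₂, p₃, p₄` of the unit circle in (counterclockwise) cyclic order,
the chords `p₁p₃` and `p₂p₄` (interleaved endpoints) intersect, while the chords `p₁p₂` and
`p₃p₄` (non-interleaved endpoints) are disjoint. -/
theorem stmt9 (θ₁ θ₂ θ₃ θ₄ : ℝ) (h12 : θ₁ < θ₂) (h23 : θ₂ < θ₃) (h34 : θ₃ < θ₄)
    (hspan : θ₄ - θ₁ < 2 * Real.pi) :
    (segment ℝ ((Real.cos θ₁, Real.sin θ₁) : ℝ × ℝ) (Real.cos θ₃, Real.sin θ₃) ∩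
        segment ℝ ((Real.cos θ₂, Real.sin θ₂) : ℝ × ℝ) (Real.cos θ₄, Real.sin θ₄)).Nonempty ∧
      segment ℝ ((Real.cos θ₁, Real.sin θ₁) : ℝ × ℝ) (Real.cos θ₂, Real.sin θ₂) ∩
        segment ℝ ((Real.cos θ₃, Real.sin θ₃) : ℝ × ℝ) (Real.cos θ₄, Real.sin θ₄) = ∅ := by
  have hpi := Real.pi_pos
  set p₁ : ℝ × ℝ := (Real.cos θ₁, Real.sin θ₁)
  set p₂ : ℝ × ℝ := (Real.cos θ₂, Real.sin θ₂)
  set p₃ : ℝ × ℝ := (Real.cos θ₃, Real.sin θ₃)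
  set p₄ : ℝ × ℝ := (Real.cos θ₄, Real.sin θ₄)
  -- positivity of sines of half-differences
  have hs : ∀ x y : ℝ, x < y → y - x < 2 * Real.pi → 0 < Real.sin ((y - x)/2) := by
    intro x y h1 h2
    apply Real.sin_pos_of_pos_of_lt_pi <;> [linarith; linarith]
  have s12 := hs θ₁ θ₂ h12 (by linarith)
  have s13 := hs θ₁ θ₃ (by linarith) (by linarith)
  have s14 := hs θ₁ θ₄ (by linarith) (by linarith)
  have s23 := hs θ₂ θ₃ h23 (by linarith)
  have s24 := hs θ₂ θ₄ (by linarith) (by linarith)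
  have s34 := hs θ₃ θ₄ h34 (by linarith)
  have sneg : ∀ x y : ℝ, Real.sin ((x - y)/2) = -Real.sin ((y - x)/2) := by
    intro x y; rw [show (x-y)/2 = -((y-x)/2) by ring, Real.sin_neg]
  -- key cross product values
  have c24_1 : crossF p₂ p₄ p₁ = 4 * Real.sin ((θ₁-θ₄)/2) * Real.sin ((θ₄-θ₂)/2) * Real.sin ((θ₁-θ₂)/2) :=
    crossF_trig θ₂ θ₄ θ₁
  have c24_3 : crossF p₂ p₄ p₃ = 4 * Real.sin ((θ₃-θ₄)/2) * Real.sin ((θ₄-θ₂)/2) * Real.sin ((θ₃-θ₂)/2) :=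
    crossF_trig θ₂ θ₄ θ₃
  have c13_2 : crossF p₁ p₃ p₂ = 4 * Real.sin ((θ₂-θ₃)/2) * Real.sin ((θ₃-θ₁)/2) * Real.sin ((θ₂-θ₁)/2) :=
    crossF_trig θ₁ θ₃ θ₂
  have c13_4 : crossF p₁ p₃ p₄ = 4 * Real.sin ((θ₄-θ₃)/2) * Real.sin ((θ₃-θ₁)/2) * Real.sin ((θ₄-θ₁)/2) :=
    crossF_trig θ₁ θ₃ θ₄
  have c12_3 : crossF p₁ p₂ p₃ = 4 * Real.sin ((θ₃-θ₂)/2) * Real.sin ((θ₂-θ₁)/2) * Real.sin ((θ₃-θ₁)/2) :=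
    crossF_trig θ₁ θ₂ θ₃
  have c12_4 : crossF p₁ p₂ p₄ = 4 * Real.sin ((θ₄-θ₂)/2) * Real.sin ((θ₂-θ₁)/2) * Real.sin ((θ₄-θ₁)/2) :=
    crossF_trig θ₁ θ₂ θ₄
  have h241 : 0 < crossF p₂ p₄ p₁ := by
    rw [c24_1, sneg θ₁ θ₄, sneg θ₁ θ₂]; nlinarith [mul_pos (mul_pos s14 s24) s12]
  have h243 : crossF p₂ p₄ p₃ < 0 := by
    rw [c24_3, sneg θ₃ θ₄]; nlinarith [mul_pos (mul_pos s34 s24) s23]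
  have h132 : crossF p₁ p₃ p₂ < 0 := by
    rw [c13_2, sneg θ₂ θ₃]; nlinarith [mul_pos (mul_pos s23 s13) s12]
  have h134 : 0 < crossF p₁ p₃ p₄ := by
    rw [c13_4]; nlinarith [mul_pos (mul_pos s34 s13) s14]
  have h123 : 0 < crossF p₁ p₂ p₃ := by
    rw [c12_3]; nlinarith [mul_pos (mul_pos s23 s12) s13]
  have h124 : 0 < crossF p₁ p₂ p₄ := by
    rw [c12_4]; nlinarith [mul_pos (mul_pos s24 s12) s14]
  constructor
  · -- intersecting chords
    set A := crossF p₂ p₄ p₁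
    set B := crossF p₂ p₄ p₃
    have hAB : 0 < A - B := by linarith
    set t : ℝ := A / (A - B) with ht
    have ht0 : 0 < t := div_pos h241 hAB
    have ht1 : t < 1 := by
      rw [ht, div_lt_one hAB]; linarith
    set q : ℝ × ℝ := (1 - t) • p₁ + t • p₃ with hq
    have hq13 : q ∈ segment ℝ p₁ p₃ := ⟨1 - t, t, by linarith, le_of_lt ht0, by ring, rfl⟩
    -- q is on line p₂ p₄
    have hq24 : crossF p₂ p₄ q = 0 := by
      rw [hq, crossF_combo p₂ p₄ p₁ p₃ (1 - t) t (by ring)]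
      have : (1 - t) * A + t * B = 0 := by
        rw [ht]; field_simp; ring
      linarith [this]
    have hq13' : crossF p₁ p₃ q = 0 := by
      rw [hq, crossF_combo p₁ p₃ p₁ p₃ (1 - t) t (by ring)]
      have e1 : crossF p₁ p₃ p₁ = 0 := by simp only [crossF]; ring
      have e3 : crossF p₁ p₃ p₃ = 0 := by simp only [crossF]; ring
      rw [e1, e3]; ring
    -- the candidate on segment p₂ p₄
    set C := crossF p₁ p₃ p₂ with hC
    set D := crossF p₁ p₃ p₄ with hD
    have hDC : 0 < D - C := by linarith
    set s : ℝ := (-C) / (D - C) with hsdef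
    have hs0 : 0 < s := div_pos (by linarith) hDC
    have hs1 : s < 1 := by
      rw [hsdef, div_lt_one hDC]; linarith
    set r : ℝ × ℝ := (1 - s) • p₂ + s • p₄ with hr
    have hr24 : r ∈ segment ℝ p₂ p₄ := ⟨1 - s, s, by linarith, le_of_lt hs0, by ring, rfl⟩
    have hr13 : crossF p₁ p₃ r = 0 := by
      rw [hr, crossF_combo p₁ p₃ p₂ p₄ (1 - s) s (by ring)]
      have : (1 - s) * C + s * D = 0 := by
        rw [hsdef]; field_simp; ring
      linarith [this]
    have hr24' : crossF p₂ p₄ r = 0 := by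
      rw [hr, crossF_combo p₂ p₄ p₂ p₄ (1 - s) s (by ring)]
      have e1 : crossF p₂ p₄ p₂ = 0 := by simp only [crossF]; ring
      have e3 : crossF p₂ p₄ p₄ = 0 := by simp only [crossF]; ring
      rw [e1, e3]; ring
    -- q = r by solving linear system
    have hqr : q = r := by
      have h1 : (p₃.1 - p₁.1) * (q.2 - r.2) - (p₃.2 - p₁.2) * (q.1 - r.1) = 0 := by
        have := hq13'; have := hr13
        simp only [crossF] at *
        linarith
      have h2 : (p₄.1 - p₂.1) * (q.2 - r.2) - (p₄.2 - p₂.2) * (q.1 - r.1) = 0 := by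
        simp only [crossF] at hq24 hr24'
        linarith
      have hdet : (p₃.1 - p₁.1) * (p₄.2 - p₂.2) - (p₃.2 - p₁.2) * (p₄.1 - p₂.1) ≠ 0 := by
        have : D - C = (p₃.1 - p₁.1) * (p₄.2 - p₂.2) - (p₃.2 - p₁.2) * (p₄.1 - p₂.1) := by
          rw [hC, hD]; simp only [crossF]; ring
        rw [← this]; exact ne_of_gt hDC
      have e1 : q.1 = r.1 := by
        have h3 : ((p₃.1 - p₁.1) * (p₄.2 - p₂.2) - (p₃.2 - p₁.2) * (p₄.1 - p₂.1)) * (q.1 - r.1) = 0 := by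
          linear_combination (p₄.1 - p₂.1) * h1 - (p₃.1 - p₁.1) * h2
        rcases mul_eq_zero.mp h3 with h | h
        · exact absurd h hdet
        · linarith
      have e2 : q.2 = r.2 := by
        have h3 : ((p₃.1 - p₁.1) * (p₄.2 - p₂.2) - (p₃.2 - p₁.2) * (p₄.1 - p₂.1)) * (q.2 - r.2) = 0 := by
          linear_combination (p₄.2 - p₂.2) * h1 - (p₃.2 - p₁.2) * h2
        rcases mul_eq_zero.mp h3 with h | h
        · exact absurd h hdet
        · linarith
      exact Prod.ext e1 e2
    exact ⟨q, hq13, hqr ▸ hr24⟩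
  · -- disjoint chords
    ext x
    simp only [Set.mem_inter_iff, Set.mem_empty_iff_false, iff_false, not_and]
    intro hx12 hx34
    have h0 : crossF p₁ p₂ x = 0 := by
      obtain ⟨u, v, hu, hv, huv, hc⟩ := crossF_mem_segment (a := p₁) (b := p₂) hx12
      have e1 : crossF p₁ p₂ p₁ = 0 := by simp only [crossF]; ring
      have e2 : crossF p₁ p₂ p₂ = 0 := by simp only [crossF]; ring
      rw [e1, e2] at hc; rw [hc]; ring
    have hpos : 0 < crossF p₁ p₂ x := by
      obtain ⟨u, v, hu, hv, huv, hc⟩ := crossF_mem_segment (a := p₁) (b := p₂) hx34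
      rw [hc]
      rcases eq_or_lt_of_le hu with h | h
      · rw [← h] at huv ⊢; simp at huv ⊢; rw [huv]; simpa using h124
      · nlinarith [mul_pos h h123, mul_nonneg hv h124.le]
    linarith
end

section
/- Fix positive integers k and ℓ, let n = k·(ℓ+2), and consider 2n circle positions 1, …, 2n (positions 1, …, n on the upper semicircle and n+1, …, 2n on the lower). For 1 ≤ j ≤ k, the j-th upper special chord is {(j−1)(ℓ+2)+1, j(ℓ+2)} and its arc A_j is the set of the ℓ positions strictly between its endpoints; the j-th lower special chord is {n+(j−1)(ℓ+2)+1, n+j(ℓ+2)} and its arc A_{k+j} is the set of the ℓ positions strictly between its endpoints. Let U = A_1 ∪ ⋯ ∪ A_k and L = A_{k+1} ∪ ⋯ ∪ A_{2k}. For a bijection M : U → L, let G(M) be the simple graph on vertex set Fin (2k) ⊕ U in which the vertex Sum.inl j represents the j-th special chord (upper chords for 1 ≤ j ≤ k, lower chords for k+1 ≤ j ≤ 2k), the vertex Sum.inr x represents the chord {x, M(x)}, and two vertices are adjacent if and only if their chords interleave. Then for any two good matchings M₁ and M₂: if there exists a graph isomorphism φ : G(M₁) ≃ G(M₂) satisfying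 φ (Sum.inl j) = Sum.inl j for every j ∈ Fin (2k), then M₁ = M₂. -/
/-- The `ℓ` positions strictly between the endpoints `j·(ℓ+2)+1` and `(j+1)·(ℓ+2)` of the
`(j+1)`-st upper special chord (positions are `1, …, 2n` with `n = k(ℓ+2)`; here `0 ≤ j < k`). -/
def upperArc (ℓ j : ℕ) : Set ℕ := Set.Ioo (j * (ℓ + 2) + 1) ((j + 1) * (ℓ + 2))

/-- The `ℓ` positions strictly between the endpoints of the `(j+1)`-st lower special chord. -/
def lowerArc (k ℓ j : ℕ) : Set ℕ :=
  Set.Ioo (k * (ℓ + 2) + j * (ℓ + 2) + 1) (k * (ℓ + 2) + (j + 1) * (ℓ + 2))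

/-- `U`, the union of the upper arcs. -/
def upperPts (k ℓ : ℕ) : Set ℕ := ⋃ j < k, upperArc ℓ j

/-- `L`, the union of the lower arcs. -/
def lowerPts (k ℓ : ℕ) : Set ℕ := ⋃ j < k, lowerArc k ℓ j

/-- A matching (bijection) `M : U → L` is good if no three points of one upper arc are matched
into a single lower arc. -/
def GoodMatching (k ℓ : ℕ) (M : ↥(upperPts k ℓ) ≃ ↥(lowerPts k ℓ)) : Prop :=
  ¬ ∃ i < k, ∃ j < k, ∃ x₁ x₂ x₃ : ↥(upperPts k ℓ),
      x₁ ≠ x₂ ∧ x₁ ≠ x₃ ∧ x₂ ≠ x₃ ∧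
      (x₁ : ℕ) ∈ upperArc ℓ i ∧ (x₂ : ℕ) ∈ upperArc ℓ i ∧ (x₃ : ℕ) ∈ upperArc ℓ i ∧
      (M x₁ : ℕ) ∈ lowerArc k ℓ j ∧ (M x₂ : ℕ) ∈ lowerArc k ℓ j ∧ (M x₃ : ℕ) ∈ lowerArc k ℓ j

/-- The endpoints `(lo, hi)` of the `(j+1)`-st special chord: for `j < k` the upper chords,
for `k ≤ j < 2k` the lower ones. -/
def specialChord (k ℓ : ℕ) (j : Fin (2 * k)) : ℕ × ℕ :=
  if (j : ℕ) < k then ((j : ℕ) * (ℓ + 2) + 1, ((j : ℕ) + 1) * (ℓ + 2))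
  else (k * (ℓ + 2) + ((j : ℕ) - k) * (ℓ + 2) + 1, k * (ℓ + 2) + ((j : ℕ) - k + 1) * (ℓ + 2))

/-- The chord `(lo, hi)` associated to a vertex: special chords for `Sum.inl j`, matching
chords `{x, M x}` for `Sum.inr x`. -/
def chordOf (k ℓ : ℕ) (M : ↥(upperPts k ℓ) ≃ ↥(lowerPts k ℓ)) :
    Fin (2 * k) ⊕ ↥(upperPts k ℓ) → ℕ × ℕ :=
  Sum.elim (specialChord k ℓ) (fun x => ((x : ℕ), (M x : ℕ)))

/-- Two chords, given as pairs (lower endpoint, higher endpoint), interleave. -/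
def Interleave (p q : ℕ × ℕ) : Prop :=
  (p.1 < q.1 ∧ q.1 < p.2 ∧ p.2 < q.2) ∨ (q.1 < p.1 ∧ p.1 < q.2 ∧ q.2 < p.2)

/-- The circle graph `G(M)` of a matching `M`: vertices are the `2k` special chords together
with the matching chords `{x, M x}` for `x ∈ U`, adjacent iff the chords interleave. -/
def matchGraph (k ℓ : ℕ) (M : ↥(upperPts k ℓ) ≃ ↥(lowerPts k ℓ)) :
    SimpleGraph (Fin (2 * k) ⊕ ↥(upperPts k ℓ)) :=
  SimpleGraph.fromRel (fun u v => Interleave (chordOf k ℓ M u) (chordOf k ℓ M v))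

/-!
The isomorphism fixes the special chords, so it induces a permutation `σ` of `U` that keeps every
matching chord in its upper arc and in its lower arc and preserves crossings. Two points of one
upper arc that are matched into different lower arcs have their crossing decided by the order of
those lower arcs, so `σ` keeps their order; comparing ranks, `σ` can then only exchange the two
points of an upper arc that are matched into a common lower arc (goodness allows at most two). The
same holds for the lower endpoints, and checking the four combinations of fixed and exchanged
endpoints against the crossing of the two chords involved shows that both matchings have the same
chords.
-/

open Function Set

namespace ChordDiagram

variable {V P Q γ : Type*}

def AtMostTwoToOne (K : V → γ) : Prop :=
  ∀ ⦃u v w⦄, K u = K w → K v = K w → u ≠ w → v ≠ w → u = v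

def SwapsWithinFibers (K : V → γ) (p₁ p₂ : V → P) : Prop :=
  ∀ v, p₂ v = p₁ v ∨ ∃ w ≠ v, K w = K v ∧ p₂ v = p₁ w ∧ p₂ w = p₁ v

/-- For chords `v ↦ {p v, q v}` whose `p`-ends all lie on one side of the circle and whose
`q`-ends all lie on the other, chords `v` and `w` cross exactly when this holds. -/
def Crosses [LT P] [LT Q] (p : V → P) (q : V → Q) (v w : V) : Prop :=
  p v < p w ↔ q v < q w

theorem crosses_comm [LT P] [LT Q] {p : V → P} {q : V → Q} {v w : V} :
    Crosses p q v w ↔ Crosses q p v w :=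
  Iff.comm

section Swaps

variable [LinearOrder P] {p₁ p₂ : V → P} {s : Set V}

theorem ncard_inter_preimage_Iio_eq (hp₁ : Injective p₁) (hp₂ : Injective p₂)
    (hs : p₁ '' s = p₂ '' s) (t : P) :
    (s ∩ p₁ ⁻¹' Iio t).ncard = (s ∩ p₂ ⁻¹' Iio t).ncard := by
  rw [← ncard_image_of_injective _ hp₁, ← ncard_image_of_injective _ hp₂,
    image_inter_preimage, image_inter_preimage, hs]

variable [Finite V] {K : V → γ}

theorem fiber_eq_of_apply_eq_of_lt (hp₁ : Injective p₁) (hp₂ : Injective p₂)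
    (hs : p₁ '' s = p₂ '' s)
    (hmono : ∀ u ∈ s, ∀ w ∈ s, K u ≠ K w → (p₁ u < p₁ w ↔ p₂ u < p₂ w))
    {v w : V} (hv : v ∈ s) (hw : w ∈ s) (hvw : p₂ v = p₁ w) (hlt : p₁ v < p₁ w) :
    K v = K w := by
  by_contra hK
  have hvw₂ : p₂ v < p₂ w := (hmono v hv w hw hK).mp hlt
  -- `p₂ v = p₁ w` has as many `p₂`-predecessors as `p₁`-predecessors in `s`, but the former
  -- set is strictly contained in the latter
  have hsub : s ∩ p₂ ⁻¹' Iio (p₂ v) ⊂ s ∩ p₁ ⁻¹' Iio (p₁ w) := by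
    refine ssubset_iff_of_subset ?_ |>.mpr ⟨v, ⟨hv, hlt⟩, fun h => lt_irrefl _ h.2⟩
    rintro u ⟨hu, hu₂⟩
    refine ⟨hu, show p₁ u < p₁ w from ?_⟩
    by_contra! hwu
    rcases ne_or_eq (K u) (K w) with huw | huw
    · have hlt' : p₁ w < p₁ u := hwu.lt_of_ne fun h => huw (congrArg K (hp₁ h).symm)
      exact lt_asymm (hvw₂.trans ((hmono w hw u hu (Ne.symm huw)).mp hlt')) hu₂
    · have huv : K v ≠ K u := huw ▸ hK
      exact lt_asymm ((hmono v hv u hu huv).mp (hlt.trans_le hwu)) hu₂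
  have := ncard_lt_ncard hsub
  rw [ncard_inter_preimage_Iio_eq hp₁ hp₂ hs, hvw] at this
  exact lt_irrefl _ this

theorem fiber_eq_of_apply_eq (hp₁ : Injective p₁) (hp₂ : Injective p₂) (hs : p₁ '' s = p₂ '' s)
    (hmono : ∀ u ∈ s, ∀ w ∈ s, K u ≠ K w → (p₁ u < p₁ w ↔ p₂ u < p₂ w))
    {v w : V} (hv : v ∈ s) (hw : w ∈ s) (hvw : p₂ v = p₁ w) : K v = K w := by
  by_contra hK
  rcases lt_trichotomy (p₁ v) (p₁ w) with hlt | heq | hgt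
  · exact hK (fiber_eq_of_apply_eq_of_lt hp₁ hp₂ hs hmono hv hw hvw hlt)
  · exact hK (congrArg K (hp₁ heq))
  · have hmono' : ∀ u ∈ s, ∀ w ∈ s, K u ≠ K w → (p₂ u < p₂ w ↔ p₁ u < p₁ w) :=
      fun u hu w hw h => (hmono u hu w hw h).symm
    exact hK (fiber_eq_of_apply_eq_of_lt hp₂ hp₁ hs.symm hmono' hw hv hvw.symm
      ((hmono w hw v hv (Ne.symm hK)).mp hgt)).symm

theorem fixed_or_swapped (hK : AtMostTwoToOne K) (hp₁ : Injective p₁) (hp₂ : Injective p₂)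
    (hs : p₁ '' s = p₂ '' s) (hmono : ∀ u ∈ s, ∀ w ∈ s, K u ≠ K w → (p₁ u < p₁ w ↔ p₂ u < p₂ w))
    {v : V} (hv : v ∈ s) :
    p₂ v = p₁ v ∨ ∃ w ≠ v, K w = K v ∧ p₂ v = p₁ w ∧ p₂ w = p₁ v := by
  refine or_iff_not_imp_left.mpr fun hfix => ?_
  obtain ⟨w, hw, hwv⟩ : p₂ v ∈ p₁ '' s := hs ▸ mem_image_of_mem p₂ hv
  have hwv' : w ≠ v := by rintro rfl; exact hfix hwv.symm
  obtain ⟨u, hu, huw⟩ : p₂ w ∈ p₁ '' s := hs ▸ mem_image_of_mem p₂ hw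
  have huw' : u ≠ w := by rintro rfl; exact hwv' (hp₂ (huw.symm.trans hwv))
  have hKu : K u = K w := (fiber_eq_of_apply_eq hp₁ hp₂ hs hmono hw hu huw.symm).symm
  have hKv : K v = K w := fiber_eq_of_apply_eq hp₁ hp₂ hs hmono hv hw hwv.symm
  exact ⟨w, hwv', hKv.symm, hwv.symm, hK hKu hKv huw' hwv'.symm ▸ huw.symm⟩

theorem swapsWithinFibers {β : Type*} (hK : AtMostTwoToOne K) (hp₁ : Injective p₁)
    (hp₂ : Injective p₂) (hrange : range p₁ = range p₂) (ι : P → β)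
    (hι : ∀ v, ι (p₂ v) = ι (p₁ v))
    (hmono : ∀ u w, ι (p₁ u) = ι (p₁ w) → K u ≠ K w → (p₁ u < p₁ w ↔ p₂ u < p₂ w)) :
    SwapsWithinFibers K p₁ p₂ := by
  intro v
  have hfiber : p₁ ⁻¹' (ι ⁻¹' {ι (p₁ v)}) = p₂ ⁻¹' (ι ⁻¹' {ι (p₁ v)}) := by
    ext u; simp [hι]
  refine fixed_or_swapped (s := p₁ ⁻¹' (ι ⁻¹' {ι (p₁ v)})) hK hp₁ hp₂ ?_
    (fun u hu w hw => hmono u w (hu.trans (Eq.symm hw))) rfl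
  rw [image_preimage_eq_range_inter, hfiber, image_preimage_eq_range_inter, hrange]

end Swaps

section Crossings

variable [LinearOrder P] [LinearOrder Q] {K : V → γ} {p₁ p₂ : V → P} {q₁ q₂ : V → Q}

theorem lt_iff_lt_of_monotone_of_ne {β : Type*} [PartialOrder β] {κ : Q → β} (hκ : Monotone κ)
    {a b : Q} (h : κ a ≠ κ b) : a < b ↔ κ a < κ b :=
  ⟨fun hab => (hκ hab.le).lt_of_ne h, hκ.reflect_lt⟩

theorem lt_iff_lt_of_crosses_iff {β : Type*} [PartialOrder β] {κ : Q → β} (hκ : Monotone κ)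
    (hκq : ∀ v, κ (q₂ v) = κ (q₁ v)) {u w : V}
    (hcross : Crosses p₁ q₁ u w ↔ Crosses p₂ q₂ u w) (hne : κ (q₁ u) ≠ κ (q₁ w)) :
    p₁ u < p₁ w ↔ p₂ u < p₂ w := by
  have h₂ := lt_iff_lt_of_monotone_of_ne hκ (a := q₂ u) (b := q₂ w) (by rwa [hκq, hκq])
  rw [hκq, hκq] at h₂
  rw [Crosses, Crosses, lt_iff_lt_of_monotone_of_ne hκ hne, h₂] at hcross
  tauto

theorem false_of_fixed_of_swapped (hK : AtMostTwoToOne K) (hp₂ : Injective p₂)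
    (hq₁ : Injective q₁) (hcross : ∀ v w, v ≠ w → (Crosses p₁ q₁ v w ↔ Crosses p₂ q₂ v w))
    (hp : SwapsWithinFibers K p₁ p₂) {v w : V} (hpv : p₂ v = p₁ v) (hwv : w ≠ v)
    (hKw : K w = K v) (hqv : q₂ v = q₁ w) (hqw : q₂ w = q₁ v) : False := by
  rcases hp w with hpw | ⟨u, huw, hKu, hpwu, -⟩
  · have h := hcross v w hwv.symm
    rw [Crosses, Crosses, hpv, hpw, hqv, hqw] at h
    have hflip : q₁ v < q₁ w ↔ q₁ w < q₁ v := by tauto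
    obtain hvw | hvw | hvw := lt_trichotomy (q₁ v) (q₁ w)
    · exact lt_asymm hvw (hflip.mp hvw)
    · exact hwv (hq₁ hvw.symm)
    · exact lt_asymm hvw (hflip.mpr hvw)
  · obtain rfl : u = v := hK hKu hKw.symm huw hwv.symm
    exact hwv (hp₂ (hpwu.trans hpv.symm))

theorem exists_eq_eq_of_swapsWithinFibers (hK : AtMostTwoToOne K) (hp₁ : Injective p₁)
    (hp₂ : Injective p₂) (hq₁ : Injective q₁) (hq₂ : Injective q₂)
    (hcross : ∀ v w, v ≠ w → (Crosses p₁ q₁ v w ↔ Crosses p₂ q₂ v w))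
    (hp : SwapsWithinFibers K p₁ p₂) (hq : SwapsWithinFibers K q₁ q₂) (v : V) :
    ∃ w, p₂ v = p₁ w ∧ q₂ v = q₁ w := by
  rcases hp v with hpv | ⟨w, hwv, hKw, hpvw, hpwv⟩ <;>
    rcases hq v with hqv | ⟨w', hw'v, hKw', hqvw', hqw'v⟩
  · exact ⟨v, hpv, hqv⟩
  · exact (false_of_fixed_of_swapped hK hp₂ hq₁ hcross hp hpv hw'v hKw' hqvw' hqw'v).elim
  · exact (false_of_fixed_of_swapped hK hq₂ hp₁
      (fun v w h => crosses_comm.trans ((hcross v w h).trans crosses_comm))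
      hq hqv hwv hKw hpvw hpwv).elim
  · obtain rfl : w' = w := hK hKw' hKw hw'v hwv
    exact ⟨w', hpvw, hqvw'⟩

/-- `ι` and `κ` number the arcs of the two sides of the circle. -/
theorem exists_eq_eq_of_crosses_iff [Finite V] {α β : Type*} [PartialOrder α] [PartialOrder β]
    {ι : P → α} {κ : Q → β} (hι : Monotone ι) (hκ : Monotone κ)
    (hp₁ : Injective p₁) (hp₂ : Injective p₂) (hq₁ : Injective q₁) (hq₂ : Injective q₂)
    (hp : range p₁ = range p₂) (hq : range q₁ = range q₂)
    (hιp : ∀ v, ι (p₂ v) = ι (p₁ v)) (hκq : ∀ v, κ (q₂ v) = κ (q₁ v))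
    (hgood : AtMostTwoToOne fun v => (ι (p₁ v), κ (q₁ v)))
    (hcross : ∀ v w, v ≠ w → (Crosses p₁ q₁ v w ↔ Crosses p₂ q₂ v w)) (v : V) :
    ∃ w, p₂ v = p₁ w ∧ q₂ v = q₁ w := by
  have hne : ∀ {u w}, (ι (p₁ u), κ (q₁ u)) ≠ (ι (p₁ w), κ (q₁ w)) → u ≠ w := by
    rintro u w h rfl; exact h rfl
  have hswap_p := swapsWithinFibers hgood hp₁ hp₂ hp ι hιp fun u w hι' hK =>
    lt_iff_lt_of_crosses_iff hκ hκq (hcross u w (hne hK)) fun hκ' => hK (Prod.ext hι' hκ')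
  have hswap_q := swapsWithinFibers hgood hq₁ hq₂ hq κ hκq fun u w hκ' hK =>
    lt_iff_lt_of_crosses_iff hι hιp (crosses_comm.trans ((hcross u w (hne hK)).trans crosses_comm))
      fun hι' => hK (Prod.ext hι' hκ')
  exact exists_eq_eq_of_swapsWithinFibers hgood hp₁ hp₂ hq₁ hq₂ hcross hswap_p hswap_q v

end Crossings

end ChordDiagram

open ChordDiagram

theorem Equiv.exists_apply_inr_eq_inr {α β γ : Type*} (e : α ⊕ β ≃ α ⊕ γ)
    (he : ∀ a, e (.inl a) = .inl a) (b : β) : ∃ c, e (.inr b) = .inr c := by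
  rcases h : e (.inr b) with a | c
  · exact absurd (e.injective (h.trans (he a).symm)) Sum.inr_ne_inl
  · exact ⟨c, rfl⟩

theorem Equiv.exists_sum_inr_eq {α β γ : Type*} (e : α ⊕ β ≃ α ⊕ γ)
    (he : ∀ a, e (.inl a) = .inl a) : ∃ σ : β ≃ γ, ∀ b, e (.inr b) = .inr (σ b) := by
  choose f hf using e.exists_apply_inr_eq_inr he
  choose g hg using e.symm.exists_apply_inr_eq_inr fun a => e.symm_apply_eq.mpr (he a).symm
  refine ⟨⟨f, g, fun b => ?_, fun c => ?_⟩, hf⟩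
  · apply Sum.inr_injective
    rw [← hg, ← hf, e.symm_apply_apply]
  · apply Sum.inr_injective
    rw [← hf, ← hg, e.apply_symm_apply]

def upperIdx (ℓ x : ℕ) : ℕ := (x - 2) / (ℓ + 2)

def lowerIdx (k ℓ x : ℕ) : ℕ := (x - (k * (ℓ + 2) + 2)) / (ℓ + 2)

theorem upperIdx_monotone (ℓ : ℕ) : Monotone (upperIdx ℓ) :=
  fun _ _ h => Nat.div_le_div_right (Nat.sub_le_sub_right h _)

theorem lowerIdx_monotone (k ℓ : ℕ) : Monotone (lowerIdx k ℓ) :=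
  fun _ _ h => Nat.div_le_div_right (Nat.sub_le_sub_right h _)

section Arcs

variable {k ℓ i x : ℕ}

theorem upperIdx_eq_of_mem (hx : x ∈ upperArc ℓ i) : upperIdx ℓ x = i := by
  obtain ⟨h₁, h₂⟩ := hx
  have : (i + 1) * (ℓ + 2) = i * (ℓ + 2) + (ℓ + 2) := by ring
  exact Nat.div_eq_of_lt_le (by omega) (by omega)

theorem lowerIdx_eq_of_mem (hx : x ∈ lowerArc k ℓ i) : lowerIdx k ℓ x = i := by
  obtain ⟨h₁, h₂⟩ := hx
  have : (i + 1) * (ℓ + 2) = i * (ℓ + 2) + (ℓ + 2) := by ring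
  exact Nat.div_eq_of_lt_le (by omega) (by omega)

theorem lt_of_mem_upperPts (hx : x ∈ upperPts k ℓ) : x < k * (ℓ + 2) := by
  obtain ⟨i, hi, hx₁, hx₂⟩ := mem_iUnion₂.mp hx
  have : (i + 1) * (ℓ + 2) ≤ k * (ℓ + 2) := Nat.mul_le_mul_right _ hi
  omega

theorem lt_of_mem_lowerPts (hx : x ∈ lowerPts k ℓ) : k * (ℓ + 2) + 1 < x := by
  obtain ⟨i, -, hx₁, -⟩ := mem_iUnion₂.mp hx
  omega

theorem mem_upperArc_of_upperIdx_eq {y : ℕ} (hx : x ∈ upperPts k ℓ) (hy : y ∈ upperArc ℓ i)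
    (h : upperIdx ℓ x = upperIdx ℓ y) : x ∈ upperArc ℓ i := by
  obtain ⟨i', -, hx'⟩ := mem_iUnion₂.mp hx
  obtain rfl : i' = i := by rw [← upperIdx_eq_of_mem hx', h, upperIdx_eq_of_mem hy]
  exact hx'

theorem mem_lowerArc_of_lowerIdx_eq {y : ℕ} (hx : x ∈ lowerPts k ℓ) (hy : y ∈ lowerArc k ℓ i)
    (h : lowerIdx k ℓ x = lowerIdx k ℓ y) : x ∈ lowerArc k ℓ i := by
  obtain ⟨i', -, hx'⟩ := mem_iUnion₂.mp hx
  obtain rfl : i' = i := by rw [← lowerIdx_eq_of_mem hx', h, lowerIdx_eq_of_mem hy]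
  exact hx'

instance finite_upperPts : Finite (upperPts k ℓ) :=
  ((finite_Iio _).subset fun _ => lt_of_mem_upperPts).to_subtype

end Arcs

section MatchGraph

variable {k ℓ : ℕ} (M : upperPts k ℓ ≃ lowerPts k ℓ)

theorem matchGraph_adj_upper {i : ℕ} (hi : i < k) (x : upperPts k ℓ) :
    (matchGraph k ℓ M).Adj (.inl ⟨i, by omega⟩) (.inr x) ↔ (x : ℕ) ∈ upperArc ℓ i := by
  have hx := lt_of_mem_upperPts x.2
  have hMx := lt_of_mem_lowerPts (M x).2
  have : (i + 1) * (ℓ + 2) ≤ k * (ℓ + 2) := Nat.mul_le_mul_right _ hi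
  simp only [matchGraph, SimpleGraph.fromRel_adj, chordOf, Sum.elim_inl, Sum.elim_inr,
    specialChord, if_pos hi, Interleave, upperArc, mem_Ioo]
  constructor
  · rintro ⟨-, h⟩; omega
  · intro h; exact ⟨Sum.inl_ne_inr, by omega⟩

theorem matchGraph_adj_lower {j : ℕ} (hj : j < k) (x : upperPts k ℓ) :
    (matchGraph k ℓ M).Adj (.inl ⟨k + j, by omega⟩) (.inr x) ↔ (M x : ℕ) ∈ lowerArc k ℓ j := by
  have hx := lt_of_mem_upperPts x.2
  have hMx := lt_of_mem_lowerPts (M x).2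
  simp only [matchGraph, SimpleGraph.fromRel_adj, chordOf, Sum.elim_inl, Sum.elim_inr,
    specialChord, if_neg (Nat.not_lt.mpr (Nat.le_add_right k j)), Nat.add_sub_cancel_left,
    Interleave, lowerArc, mem_Ioo]
  constructor
  · rintro ⟨-, h⟩; omega
  · intro h; exact ⟨Sum.inl_ne_inr, by omega⟩

theorem matchGraph_adj_inr_inr (x y : upperPts k ℓ) :
    (matchGraph k ℓ M).Adj (.inr x) (.inr y) ↔
      x ≠ y ∧ Crosses (fun v : upperPts k ℓ => (v : ℕ)) (fun v => (M v : ℕ)) x y := by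
  have hx := lt_of_mem_upperPts x.2
  have hy := lt_of_mem_upperPts y.2
  have hMx := lt_of_mem_lowerPts (M x).2
  have hMy := lt_of_mem_lowerPts (M y).2
  simp only [matchGraph, SimpleGraph.fromRel_adj, chordOf, Sum.elim_inr, Interleave, Crosses,
    ne_eq, Sum.inr.injEq]
  refine and_congr_right fun hxy => ?_
  have h₁ : (x : ℕ) ≠ y := fun h => hxy (Subtype.ext h)
  have h₂ : (M x : ℕ) ≠ M y := fun h => hxy (M.injective (Subtype.ext h))
  constructor
  · intro h; omega
  · intro h; omega

end MatchGraph

section Isomorphism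

variable {k ℓ : ℕ} {M₁ M₂ : upperPts k ℓ ≃ lowerPts k ℓ}
  {φ : matchGraph k ℓ M₁ ≃g matchGraph k ℓ M₂} {σ : upperPts k ℓ ≃ upperPts k ℓ}

theorem upperIdx_perm (hφ : ∀ j, φ (.inl j) = .inl j) (hσ : ∀ x, φ (.inr x) = .inr (σ x))
    (x : upperPts k ℓ) : upperIdx ℓ (σ x) = upperIdx ℓ x := by
  obtain ⟨i, hi, hx⟩ := mem_iUnion₂.mp x.2
  have h := φ.map_adj_iff (v := .inl ⟨i, by omega⟩) (w := .inr x)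
  rw [hφ, hσ, matchGraph_adj_upper M₂ hi, matchGraph_adj_upper M₁ hi] at h
  rw [upperIdx_eq_of_mem (h.mpr hx), upperIdx_eq_of_mem hx]

theorem lowerIdx_perm (hφ : ∀ j, φ (.inl j) = .inl j) (hσ : ∀ x, φ (.inr x) = .inr (σ x))
    (x : upperPts k ℓ) : lowerIdx k ℓ (M₂ (σ x)) = lowerIdx k ℓ (M₁ x) := by
  obtain ⟨j, hj, hx⟩ := mem_iUnion₂.mp (M₁ x).2
  have h := φ.map_adj_iff (v := .inl ⟨k + j, by omega⟩) (w := .inr x)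
  rw [hφ, hσ, matchGraph_adj_lower M₂ hj, matchGraph_adj_lower M₁ hj] at h
  rw [lowerIdx_eq_of_mem (h.mpr hx), lowerIdx_eq_of_mem hx]

theorem crosses_iff_crosses_perm (hσ : ∀ x, φ (.inr x) = .inr (σ x)) {x y : upperPts k ℓ}
    (hxy : x ≠ y) :
    Crosses (fun v : upperPts k ℓ => (v : ℕ)) (fun v => (M₁ v : ℕ)) x y ↔
      Crosses (fun v => (σ v : ℕ)) (fun v => (M₂ (σ v) : ℕ)) x y := by
  have h := φ.map_adj_iff (v := .inr x) (w := .inr y)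
  rw [hσ, hσ, matchGraph_adj_inr_inr, matchGraph_adj_inr_inr] at h
  exact (and_iff_right hxy).symm.trans (h.symm.trans (and_iff_right (σ.injective.ne hxy)))

end Isomorphism

theorem atMostTwoToOne_of_goodMatching {k ℓ : ℕ} {M : upperPts k ℓ ≃ lowerPts k ℓ}
    (hM : GoodMatching k ℓ M) :
    AtMostTwoToOne fun v : upperPts k ℓ => (upperIdx ℓ v, lowerIdx k ℓ (M v)) := by
  intro u v w hu hv huw hvw
  by_contra huv
  obtain ⟨i, hi, hw⟩ := mem_iUnion₂.mp w.2
  obtain ⟨j, hj, hMw⟩ := mem_iUnion₂.mp (M w).2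
  simp only [Prod.mk.injEq] at hu hv
  exact hM ⟨i, hi, j, hj, u, v, w, huv, huw, hvw,
    mem_upperArc_of_upperIdx_eq u.2 hw hu.1, mem_upperArc_of_upperIdx_eq v.2 hw hv.1, hw,
    mem_lowerArc_of_lowerIdx_eq (M u).2 hMw hu.2, mem_lowerArc_of_lowerIdx_eq (M v).2 hMw hv.2,
    hMw⟩

theorem stmt10_general (k ℓ : ℕ)
    (M₁ M₂ : ↥(upperPts k ℓ) ≃ ↥(lowerPts k ℓ))
    (h₁ : GoodMatching k ℓ M₁)
    (φ : matchGraph k ℓ M₁ ≃g matchGraph k ℓ M₂)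
    (hφ : ∀ j : Fin (2 * k), φ (Sum.inl j) = Sum.inl j) :
    M₁ = M₂ := by
  obtain ⟨σ, hσ⟩ := φ.toEquiv.exists_sum_inr_eq hφ
  have hsame := exists_eq_eq_of_crosses_iff (upperIdx_monotone ℓ) (lowerIdx_monotone k ℓ)
    Subtype.val_injective (Subtype.val_injective.comp σ.injective)
    (Subtype.val_injective.comp M₁.injective)
    (Subtype.val_injective.comp (M₂.injective.comp σ.injective))
    (σ.surjective.range_comp _).symm
    ((M₁.surjective.range_comp _).trans ((M₂.surjective.comp σ.surjective).range_comp _).symm)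
    (upperIdx_perm hφ hσ) (lowerIdx_perm hφ hσ) (atMostTwoToOne_of_goodMatching h₁)
    fun _ _ => crosses_iff_crosses_perm hσ
  ext z
  obtain ⟨w, hw, hM⟩ := hsame (σ.symm z)
  simp only [comp_apply, Equiv.apply_symm_apply] at hw hM
  obtain rfl := Subtype.ext hw
  exact hM.symm

/-- A good matching is recoverable from its partially colored circle graph: if the graphs of
two good matchings `M₁, M₂` are isomorphic via an isomorphism fixing each special-chord vertex,
then `M₁ = M₂`. -/
theorem stmt10 (k ℓ : ℕ) (hk : 0 < k) (hℓ : 0 < ℓ)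
    (M₁ M₂ : ↥(upperPts k ℓ) ≃ ↥(lowerPts k ℓ))
    (h₁ : GoodMatching k ℓ M₁) (h₂ : GoodMatching k ℓ M₂)
    (φ : matchGraph k ℓ M₁ ≃g matchGraph k ℓ M₂)
    (hφ : ∀ j : Fin (2 * k), φ (Sum.inl j) = Sum.inl j) :
    M₁ = M₂ :=
  stmt10_general k ℓ M₁ M₂ h₁ φ hφ
end

section
/- There exist a constant c > 0 and a threshold n₀ such that for all integers n ≥ n₀, setting m = ⌊n / log₂ n⌋, one has log₂ ( (m+1)⁴ choose (n − 4m) ) ≥ 3n·log₂ n − 4n·log₂ log₂ n − c·n. -/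
lemma logb_le_three_sqrt {x : ℝ} (hx : 1 ≤ x) : Real.logb 2 x ≤ 3 * Real.sqrt x := by
  have h0 : (0:ℝ) < x := lt_of_lt_of_le one_pos hx
  have hs0 : (0:ℝ) < Real.sqrt x := Real.sqrt_pos.mpr h0
  have hlx : Real.log x = 2 * Real.log (Real.sqrt x) := by
    conv_lhs => rw [show x = Real.sqrt x ^ 2 from (Real.sq_sqrt h0.le).symm]
    rw [Real.log_pow]; push_cast; ring
  have h1 : Real.log (Real.sqrt x) ≤ Real.sqrt x - 1 := Real.log_le_sub_one_of_pos hs0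
  have h2 : Real.log x ≤ 2 * Real.sqrt x := by linarith
  rw [Real.logb, div_le_iff₀ (Real.log_pos one_lt_two)]
  nlinarith [Real.log_two_gt_d9, Real.sqrt_nonneg x]

set_option maxHeartbeats 1000000 in
/-- There are `c > 0` and `n₀` such that for all `n ≥ n₀`, with `m = ⌊n / log₂ n⌋`, one has
`log₂( (m+1)⁴ choose (n − 4m) ) ≥ 3 n log₂ n − 4 n log₂ log₂ n − c n`. -/
theorem stmt12 :
    ∃ c : ℝ, 0 < c ∧ ∃ n₀ : ℕ, ∀ n : ℕ, n₀ ≤ n →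
      Real.logb 2
          (Nat.choose ((⌊(n : ℝ) / Real.logb 2 n⌋₊ + 1) ^ 4)
            (n - 4 * ⌊(n : ℝ) / Real.logb 2 n⌋₊)) ≥
        3 * (n : ℝ) * Real.logb 2 n - 4 * n * Real.logb 2 (Real.logb 2 n) - c * n := by
  refine ⟨13, by norm_num, 2 ^ 34, fun n hn => ?_⟩
  have hn2 : (2:ℝ) ^ 34 ≤ (n:ℝ) := by exact_mod_cast hn
  have hn1 : (1:ℝ) ≤ (n:ℝ) := le_trans (by norm_num) hn2
  have hnpos : (0:ℝ) < n := by linarith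
  set L := Real.logb 2 (n:ℝ) with hLdef
  have hL34 : (34:ℝ) ≤ L := by
    have h := Real.logb_le_logb_of_le (by norm_num : (1:ℝ) < 2) (by positivity) hn2
    rw [Real.logb_pow, Real.logb_self_eq_one (by norm_num)] at h
    norm_num at h
    exact h
  have hLpos : (0:ℝ) < L := by linarith
  set B := Real.logb 2 L with hBdef
  have hB0 : (0:ℝ) ≤ B := Real.logb_nonneg one_lt_two (by linarith)
  have hB : B ≤ 3 * L / 5 := by
    have h1 : B ≤ 3 * Real.sqrt L := logb_le_three_sqrt (by linarith)
    have h5 : (5:ℝ) ≤ Real.sqrt L := by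
      have h25 : Real.sqrt 25 ≤ Real.sqrt L := Real.sqrt_le_sqrt (by linarith)
      rwa [show (25:ℝ) = 5^2 by norm_num, Real.sqrt_sq (by norm_num : (0:ℝ) ≤ 5)] at h25
    nlinarith [Real.sq_sqrt hLpos.le, Real.sqrt_nonneg L]
  set m := ⌊(n:ℝ)/L⌋₊ with hmdef
  have hdivpos : (0:ℝ) < (n:ℝ)/L := by positivity
  have hnL : (n:ℝ)/L * L = n := div_mul_cancel₀ _ (ne_of_gt hLpos)
  have hm_le : (m:ℝ) ≤ (n:ℝ)/L := Nat.floor_le hdivpos.le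
  have hm_lt : (n:ℝ)/L < (m:ℝ) + 1 := Nat.lt_floor_add_one _
  have h4mn : (4*(m:ℝ)) ≤ n := by nlinarith
  have h4mn' : 4*m ≤ n := by exact_mod_cast h4mn
  set k := n - 4*m with hkdef
  have hkcast : (k:ℝ) = (n:ℝ) - 4*(m:ℝ) := by
    rw [hkdef, Nat.cast_sub h4mn']; push_cast; ring
  have hk_lb : (n:ℝ) - 4*((n:ℝ)/L) ≤ (k:ℝ) := by rw [hkcast]; linarith
  have hdiv_le : (n:ℝ)/L ≤ (n:ℝ)/34 := by
    apply div_le_div_of_nonneg_left hnpos.le (by norm_num) hL34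
  have hk_pos : (0:ℝ) < (k:ℝ) := by
    have : (n:ℝ) - 4*((n:ℝ)/34) ≤ (k:ℝ) := by linarith
    linarith
  have hk1 : 1 ≤ k := by exact_mod_cast Nat.cast_pos.mp (by exact_mod_cast hk_pos)
  have hk_le_n : (k:ℝ) ≤ n := by
    rw [hkcast]; have : (0:ℝ) ≤ (m:ℝ) := Nat.cast_nonneg m; linarith
  set N := (m+1)^4 with hNdef
  have hNcast : ((N:ℕ):ℝ) = ((m:ℝ)+1)^4 := by rw [hNdef]; push_cast; ring
  have hN_lb : ((n:ℝ)/L)^4 ≤ (N:ℝ) := by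
    rw [hNcast]; exact pow_le_pow_left₀ hdivpos.le hm_lt.le 4
  have hL_le : L ≤ 3 * Real.sqrt n := logb_le_three_sqrt hn1
  have hL4 : L^4 ≤ 81 * (n:ℝ)^2 := by
    have h := pow_le_pow_left₀ hLpos.le hL_le 4
    have heq : (3*Real.sqrt n)^4 = 81 * (n:ℝ)^2 := by
      have : (Real.sqrt n)^4 = ((Real.sqrt n)^2)^2 := by ring
      rw [mul_pow, this, Real.sq_sqrt hnpos.le]; norm_num
    linarith [heq ▸ h]
  have hn162 : (162:ℝ) ≤ (n:ℝ) := by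
    have : (162:ℝ) ≤ 2^34 := by norm_num
    linarith
  have hN2n : 2*(n:ℝ) ≤ (N:ℝ) := by
    have h1 : 2*(n:ℝ) ≤ ((n:ℝ)/L)^4 := by
      rw [div_pow, le_div_iff₀ (by positivity)]
      have e1 : 2*(n:ℝ)*L^4 ≤ 2*(n:ℝ)*(81*(n:ℝ)^2) := by
        apply mul_le_mul_of_nonneg_left hL4 (by positivity)
      have e2 : 162*(n:ℝ)^3 ≤ (n:ℝ)^4 := by
        have := mul_le_mul_of_nonneg_right hn162 (le_of_lt (pow_pos hnpos 3))
        nlinarith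
      nlinarith
    linarith
  have hn_le_N : n ≤ N := by
    have : (n:ℝ) ≤ (N:ℝ) := by linarith
    exact_mod_cast this
  have hk_le_N : k ≤ N := le_trans (Nat.sub_le _ _) hn_le_N
  set N' := N + 1 - k with hN'def
  have hN'cast : ((N':ℕ):ℝ) = (N:ℝ) + 1 - (k:ℝ) := by
    rw [hN'def, Nat.cast_sub (by omega)]; push_cast; ring
  have hNpos : (0:ℝ) < (N:ℝ) := by linarith
  have hN'_ge : (N:ℝ)/2 ≤ (N':ℝ) := by rw [hN'cast]; linarith
  have hN'pos : (0:ℝ) < (N':ℝ) := by linarith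
  -- binomial lower bound
  have hchoose : ((N':ℝ))^k / (Nat.factorial k : ℝ) ≤ (N.choose k : ℝ) := by
    have h := Nat.pow_le_choose (α := ℝ) k N
    rw [← hN'def] at h
    push_cast at h ⊢
    convert h using 2
  have hfacpos : (0:ℝ) < (Nat.factorial k : ℝ) := by exact_mod_cast Nat.factorial_pos k
  have hargpos : (0:ℝ) < ((N':ℝ))^k / (Nat.factorial k : ℝ) := by positivity
  have h1 : Real.logb 2 (((N':ℝ))^k / (Nat.factorial k : ℝ)) ≤ Real.logb 2 (N.choose k : ℝ) :=
    Real.logb_le_logb_of_le one_lt_two hargpos hchoose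
  have h2 : Real.logb 2 (((N':ℝ))^k / (Nat.factorial k : ℝ))
      = k * Real.logb 2 (N':ℝ) - Real.logb 2 (Nat.factorial k : ℝ) := by
    rw [Real.logb_div (by positivity) (ne_of_gt hfacpos), Real.logb_pow]
  -- bound on log of factorial
  have hfac : Real.logb 2 (Nat.factorial k : ℝ) ≤ (k:ℝ) * L := by
    have hfk : (Nat.factorial k : ℝ) ≤ ((k:ℝ))^k := by
      exact_mod_cast Nat.factorial_le_pow k
    have h3 : Real.logb 2 (Nat.factorial k : ℝ) ≤ Real.logb 2 (((k:ℝ))^k) :=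
      Real.logb_le_logb_of_le one_lt_two hfacpos hfk
    rw [Real.logb_pow] at h3
    have h4 : Real.logb 2 (k:ℝ) ≤ L :=
      Real.logb_le_logb_of_le one_lt_two hk_pos hk_le_n
    have : (k:ℝ) * Real.logb 2 (k:ℝ) ≤ (k:ℝ) * L :=
      mul_le_mul_of_nonneg_left h4 hk_pos.le
    linarith
  -- bound on log of N'
  have hN' : 4*L - 4*B - 1 ≤ Real.logb 2 (N':ℝ) := by
    have h5 : Real.logb 2 (((n:ℝ)/L)^4 / 2) ≤ Real.logb 2 (N':ℝ) := by
      apply Real.logb_le_logb_of_le one_lt_two (by positivity)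
      linarith
    rw [Real.logb_div (by positivity) (by norm_num), Real.logb_pow,
      Real.logb_div (ne_of_gt hnpos) (ne_of_gt hLpos),
      Real.logb_self_eq_one (by norm_num)] at h5
    push_cast at h5
    linarith
  -- combine
  have hE : (k:ℝ) * (3*L - 4*B - 1) ≤ Real.logb 2 (N.choose k : ℝ) := by
    have : (k:ℝ) * (4*L - 4*B - 1) ≤ (k:ℝ) * Real.logb 2 (N':ℝ) :=
      mul_le_mul_of_nonneg_left hN' hk_pos.le
    nlinarith
  have hcoef : (0:ℝ) ≤ 3*L - 4*B - 1 := by linarith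
  have hfinal : 3*(n:ℝ)*L - 4*(n:ℝ)*B - 13*(n:ℝ) ≤ (k:ℝ) * (3*L - 4*B - 1) := by
    have h6 : ((n:ℝ) - 4*((n:ℝ)/L)) * (3*L - 4*B - 1) ≤ (k:ℝ) * (3*L - 4*B - 1) :=
      mul_le_mul_of_nonneg_right hk_lb hcoef
    nlinarith [hdivpos.le]
  calc 3*(n:ℝ)*L - 4*(n:ℝ)*B - 13*(n:ℝ)
      ≤ (k:ℝ) * (3*L - 4*B - 1) := hfinal
    _ ≤ Real.logb 2 (N.choose k : ℝ) := hE
end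

section
/- Let k, m, n be positive integers with 2 ≤ k ≤ m, and for each 2 ≤ i ≤ k let n_i and m_i be natural numbers with m_i ≤ n_i, Σ_{i=2}^{k} n_i = n, and n_i − m_i ≤ (m choose i). Then Σ_{i=2}^{k} log₂ ( (m choose i) choose (n_i − m_i) ) ≥ Σ_{i=2}^{k} (n_i − m_i)·i·log₂(m/i) − n·log₂ n. -/
/-!
Apply `(a / b) ^ b ≤ a.choose b` twice, with `M = m.choose i` and `d = nᵢ - mᵢ`: once to get
`log₂ (M.choose d) ≥ d log₂ M - d log₂ d`, and once more to get `log₂ M ≥ i log₂ (m / i)`.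
Each error term `d log₂ d` is at most `d log₂ n`, and the `d` sum to at most `n`.
-/

open Finset Real

namespace Nat

/-- Compare `n ^ k * k!` with `k ^ k * n.descFactorial k` factor by factor:
`n (k - j) ≤ k (n - j)`. -/
theorem pow_le_pow_mul_choose {n k : ℕ} (h : k ≤ n) : n ^ k ≤ k ^ k * n.choose k := by
  have hprod : ∏ j ∈ range k, n * (k - j) ≤ ∏ j ∈ range k, k * (n - j) := by
    refine prod_le_prod' fun j _ => ?_
    rw [Nat.mul_sub, Nat.mul_sub, Nat.mul_comm n k]
    exact Nat.sub_le_sub_left (Nat.mul_le_mul_right j h) _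
  rw [prod_mul_distrib, prod_mul_distrib, prod_const, prod_const, card_range,
    ← descFactorial_eq_prod_range, ← descFactorial_eq_prod_range, descFactorial_self,
    descFactorial_eq_factorial_mul_choose] at hprod
  exact Nat.le_of_mul_le_mul_right (by linarith) (factorial_pos k)

theorem div_pow_le_choose {α : Type*} [Semifield α] [LinearOrder α] [IsStrictOrderedRing α]
    {n k : ℕ} (h : k ≤ n) : ((n : α) / k) ^ k ≤ n.choose k := by
  rcases k.eq_zero_or_pos with rfl | hk
  · simp
  rw [div_pow, div_le_iff₀ (by positivity), mul_comm]
  exact_mod_cast pow_le_pow_mul_choose h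

end Nat

section Logb

variable {b : ℝ}

theorem mul_logb_div_le_logb_choose (hb : 1 < b) {n k : ℕ} (h : k ≤ n) :
    k * logb b (n / k) ≤ logb b (n.choose k) := by
  rw [← logb_pow]
  refine logb_le_logb_of_le hb ?_ (Nat.div_pow_le_choose (α := ℝ) h)
  rcases k.eq_zero_or_pos with rfl | hk
  · simp
  exact pow_pos (div_pos (by exact_mod_cast hk.trans_le h) (by exact_mod_cast hk)) k

theorem mul_mul_logb_div_sub_le_logb_choose_choose (hb : 1 < b) {m i d : ℕ}
    (hd : d ≤ m.choose i) :
    d * i * logb b (m / i) - d * logb b d ≤ logb b ((m.choose i).choose d) := by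
  rcases d.eq_zero_or_pos with rfl | hd0
  · simp
  have hM : 0 < m.choose i := hd0.trans_le hd
  have him : i ≤ m := Nat.choose_ne_zero_iff.mp hM.ne'
  calc (d : ℝ) * i * logb b (m / i) - d * logb b d
      ≤ d * logb b (m.choose i) - d * logb b d := by
        rw [mul_assoc]
        gcongr
        exact mul_logb_div_le_logb_choose hb him
    _ = d * logb b ((m.choose i : ℝ) / d) := by
        rw [logb_div (by positivity) (by positivity), mul_sub]
    _ ≤ logb b ((m.choose i).choose d) := mul_logb_div_le_logb_choose hb hd

theorem sum_mul_logb_le {ι : Type*} (hb : 1 < b) (s : Finset ι) (f : ι → ℕ) {n : ℕ}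
    (hf : ∑ i ∈ s, f i ≤ n) :
    ∑ i ∈ s, (f i : ℝ) * logb b (f i) ≤ n * logb b n := by
  have hlogn : 0 ≤ logb b n := by
    rcases n.eq_zero_or_pos with rfl | hn
    · simp
    exact logb_nonneg hb (by exact_mod_cast hn)
  calc ∑ i ∈ s, (f i : ℝ) * logb b (f i)
      ≤ ∑ i ∈ s, (f i : ℝ) * logb b n := by
        refine sum_le_sum fun i hi => ?_
        rcases (f i).eq_zero_or_pos with h0 | hpos
        · simp [h0]
        gcongr
        exact_mod_cast (single_le_sum (fun _ _ => Nat.zero_le _) hi).trans hf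
    _ = (∑ i ∈ s, f i : ℕ) * logb b n := by rw [← sum_mul, Nat.cast_sum]
    _ ≤ n * logb b n := by gcongr

end Logb

theorem stmt13_general (k m n : ℕ)
    (ni mi : ℕ → ℕ)
    (hsum : ∑ i ∈ Finset.Icc 2 k, ni i = n)
    (hchoose : ∀ i ∈ Finset.Icc 2 k, ni i - mi i ≤ m.choose i) :
    ∑ i ∈ Finset.Icc 2 k, Real.logb 2 ((m.choose i).choose (ni i - mi i)) ≥
      (∑ i ∈ Finset.Icc 2 k, ((ni i - mi i : ℕ) : ℝ) * i * Real.logb 2 ((m : ℝ) / i))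
        - (n : ℝ) * Real.logb 2 n := by
  have hterms := sum_le_sum fun i hi =>
    mul_mul_logb_div_sub_le_logb_choose_choose one_lt_two (hchoose i hi)
  have herror := sum_mul_logb_le one_lt_two (Icc 2 k) (fun i => ni i - mi i)
    (hsum ▸ sum_le_sum fun i _ => Nat.sub_le (ni i) (mi i))
  rw [sum_sub_distrib] at hterms
  linarith

/-- The main inequality chain of the polygon-circle lower bound: for `2 ≤ k ≤ m`, `n > 0`,
counts `n_i` summing to `n` with `m_i ≤ n_i` and `n_i − m_i ≤ (m choose i)`,
`Σᵢ log₂ ((m choose i) choose (nᵢ − mᵢ)) ≥ Σᵢ (nᵢ − mᵢ)·i·log₂(m/i) − n log₂ n`. -/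
theorem stmt13 (k m n : ℕ) (hk : 2 ≤ k) (hkm : k ≤ m) (hn : 0 < n)
    (ni mi : ℕ → ℕ)
    (hmi : ∀ i ∈ Finset.Icc 2 k, mi i ≤ ni i)
    (hsum : ∑ i ∈ Finset.Icc 2 k, ni i = n)
    (hchoose : ∀ i ∈ Finset.Icc 2 k, ni i - mi i ≤ m.choose i) :
    ∑ i ∈ Finset.Icc 2 k, Real.logb 2 ((m.choose i).choose (ni i - mi i)) ≥
      (∑ i ∈ Finset.Icc 2 k, ((ni i - mi i : ℕ) : ℝ) * i * Real.logb 2 ((m : ℝ) / i))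
        - (n : ℝ) * Real.logb 2 n :=
  stmt13_general k m n ni mi hsum hchoose
end

section
/- Let k ≥ 2 be an integer and let n_i, for 2 ≤ i ≤ k, be nonnegative integers, not all zero. Set n = Σ_{i=2}^{k} n_i and N = Σ_{i=2}^{k} i·n_i. Then Σ_{i=2}^{k} n_i·(i−1)·log₂((N−n)/(i−1)) ≤ Σ_{i=2}^{k} n_i·i·log₂(n/i) − n·log₂ n + 2N·(1 + log₂ k). -/
/-! Since `i - 1 ≥ 1` and `N ≤ k n`, every `log₂ ((N - n) / (i - 1))` is at most
`log₂ (N - n) ≤ log₂ k + log₂ n`, so the left side is at most `(N - n) (log₂ k + log₂ n)`.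
Since `i ≤ k`, every `log₂ (n / i)` is at least `log₂ n - log₂ k`, so the right side is at least
`(N - n) log₂ n + N log₂ k + 2N`. -/

open Finset Real

section WeightedLog

variable {ι : Type*} {s : Finset ι} {b : ℝ}

theorem Real.logb_div_le_logb {x a : ℝ} (hb : 1 < b) (hx : 0 ≤ x) (ha : 1 ≤ a) :
    logb b (x / a) ≤ logb b x := by
  rcases hx.eq_or_lt with rfl | hx
  · simp
  · exact logb_le_logb_of_le hb (by positivity) (div_le_self hx.le ha)

theorem Real.mul_logb_le_mul_logb_add {x y z : ℝ} (hb : 1 < b) (hx : 0 ≤ x)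
    (hxyz : x ≤ y * z) : x * logb b x ≤ x * (logb b y + logb b z) := by
  rcases hx.eq_or_lt with rfl | hx
  · simp
  have hyz : 0 < y * z := hx.trans_le hxyz
  rw [← logb_mul (left_ne_zero_of_mul hyz.ne') (right_ne_zero_of_mul hyz.ne')]
  exact mul_le_mul_of_nonneg_left (logb_le_logb_of_le hb hx hxyz) hx.le

theorem sum_mul_logb_div_le {w a : ι → ℝ} {x : ℝ} (hb : 1 < b) (hw : ∀ i ∈ s, 0 ≤ w i)
    (ha : ∀ i ∈ s, 1 ≤ a i) (hx : 0 ≤ x) :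
    ∑ i ∈ s, w i * a i * logb b (x / a i) ≤ (∑ i ∈ s, w i * a i) * logb b x := by
  rw [sum_mul]
  refine sum_le_sum fun i hi => mul_le_mul_of_nonneg_left ?_ ?_
  · exact logb_div_le_logb hb hx (ha i hi)
  · exact mul_nonneg (hw i hi) (zero_le_one.trans (ha i hi))

theorem sum_mul_logb_sub_le_sum_mul_logb_div {w c : ι → ℝ} {K : ℝ} (hb : 1 < b)
    (hw : ∀ i ∈ s, 0 ≤ w i) (hc : ∀ i ∈ s, 0 < c i) (hcK : ∀ i ∈ s, c i ≤ K) :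
    (∑ i ∈ s, w i * c i) * (logb b (∑ j ∈ s, w j) - logb b K) ≤
      ∑ i ∈ s, w i * c i * logb b ((∑ j ∈ s, w j) / c i) := by
  rw [sum_mul]
  refine sum_le_sum fun i hi => ?_
  rcases (hw i hi).eq_or_lt with hwi | hwi
  · simp [← hwi]
  have hm : 0 < ∑ j ∈ s, w j := hwi.trans_le (single_le_sum hw hi)
  rw [logb_div hm.ne' (hc i hi).ne']
  have := logb_le_logb_of_le hb (hc i hi) (hcK i hi)
  exact mul_le_mul_of_nonneg_left (by linarith) (mul_nonneg hwi.le (hc i hi).le)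

end WeightedLog

theorem stmt14_general (k : ℕ) (ni : ℕ → ℕ)
    (n N : ℕ)
    (hn : n = ∑ i ∈ Finset.Icc 2 k, ni i)
    (hN : N = ∑ i ∈ Finset.Icc 2 k, i * ni i) :
    ∑ i ∈ Finset.Icc 2 k,
        (ni i : ℝ) * ((i : ℝ) - 1) * Real.logb 2 (((N : ℝ) - (n : ℝ)) / ((i : ℝ) - 1)) ≤
      (∑ i ∈ Finset.Icc 2 k, (ni i : ℝ) * i * Real.logb 2 ((n : ℝ) / i))
        - (n : ℝ) * Real.logb 2 n + 2 * (N : ℝ) * (1 + Real.logb 2 k) := by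
  have hi2 : ∀ i ∈ Icc 2 k, (2 : ℝ) ≤ i := fun i hi => by exact_mod_cast (mem_Icc.mp hi).1
  have hik : ∀ i ∈ Icc 2 k, (i : ℝ) ≤ k := fun i hi => by exact_mod_cast (mem_Icc.mp hi).2
  have hw : ∀ i ∈ Icc 2 k, (0 : ℝ) ≤ ni i := fun i _ => Nat.cast_nonneg _
  replace hn : (n : ℝ) = ∑ i ∈ Icc 2 k, (ni i : ℝ) := by simp [hn]
  replace hN : (N : ℝ) = ∑ i ∈ Icc 2 k, (ni i : ℝ) * i := by simp [hN, mul_comm]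
  have hA : (N : ℝ) - n = ∑ i ∈ Icc 2 k, (ni i : ℝ) * ((i : ℝ) - 1) := by
    rw [hN, hn, ← sum_sub_distrib]
    exact sum_congr rfl fun i _ => by ring
  have hA0 : 0 ≤ (N : ℝ) - n :=
    hA ▸ sum_nonneg fun i hi => mul_nonneg (hw i hi) (by linarith [hi2 i hi])
  have hAkn : (N : ℝ) - n ≤ k * n := by
    have hNkn : (N : ℝ) ≤ k * n := by
      rw [hN, hn, mul_sum]
      exact sum_le_sum fun i hi => by nlinarith [hw i hi, hik i hi]
    linarith [(Nat.cast_nonneg n : (0 : ℝ) ≤ n)]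
  have hlogk : 0 ≤ logb 2 (k : ℝ) := div_nonneg (log_natCast_nonneg k) (log_nonneg one_le_two)
  calc _ ≤ ((N : ℝ) - n) * logb 2 ((N : ℝ) - n) :=
        (sum_mul_logb_div_le one_lt_two hw (fun i hi => by linarith [hi2 i hi]) hA0).trans_eq
          (by rw [hA])
    _ ≤ ((N : ℝ) - n) * (logb 2 k + logb 2 n) :=
        mul_logb_le_mul_logb_add one_lt_two hA0 hAkn
    _ ≤ N * (logb 2 n - logb 2 k) - n * logb 2 n + 2 * N * logb 2 k := by
        linarith [mul_le_mul_of_nonneg_right (sub_le_self (N : ℝ) (Nat.cast_nonneg n)) hlogk]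
    _ ≤ _ := by
        have hRHS := sum_mul_logb_sub_le_sum_mul_logb_div one_lt_two hw
          (fun i hi => by linarith [hi2 i hi]) hik
        rw [← hN, ← hn] at hRHS
        linarith [(Nat.cast_nonneg N : (0 : ℝ) ≤ N)]

/-- The space bound of the succinct representation: with `n = Σᵢ nᵢ` and `N = Σᵢ i·nᵢ`
(not all `nᵢ` zero), `Σᵢ nᵢ(i−1) log₂((N−n)/(i−1)) ≤ Σᵢ nᵢ·i·log₂(n/i) − n log₂ n
+ 2N(1 + log₂ k)`. -/
theorem stmt14 (k : ℕ) (hk : 2 ≤ k) (ni : ℕ → ℕ)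
    (hne : ∃ i ∈ Finset.Icc 2 k, ni i ≠ 0)
    (n N : ℕ)
    (hn : n = ∑ i ∈ Finset.Icc 2 k, ni i)
    (hN : N = ∑ i ∈ Finset.Icc 2 k, i * ni i) :
    ∑ i ∈ Finset.Icc 2 k,
        (ni i : ℝ) * ((i : ℝ) - 1) * Real.logb 2 (((N : ℝ) - (n : ℝ)) / ((i : ℝ) - 1)) ≤
      (∑ i ∈ Finset.Icc 2 k, (ni i : ℝ) * i * Real.logb 2 ((n : ℝ) / i))
        - (n : ℝ) * Real.logb 2 n + 2 * (N : ℝ) * (1 + Real.logb 2 k) :=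
  stmt14_general k ni n N hn hN
end

section
/- Let a_u ≤ b_u, c_u ≤ d_u, a_v ≤ b_v, c_v ≤ d_v be real numbers, and let T_u = convexHull ℝ {(a_u,1), (b_u,1), (c_u,0), (d_u,0)} and T_v = convexHull ℝ {(a_v,1), (b_v,1), (c_v,0), (d_v,0)} be the corresponding trapezoids in ℝ². Then T_u ∩ T_v = ∅ if and only if (b_u < a_v and d_u < c_v) or (b_v < a_u and d_v < c_u). -/
/-!
A trapezoid is the part of the strip `0 ≤ y ≤ 1` between its legs
`x = (1 - y) c + y a` and `x = (1 - y) d + y b`, so two trapezoids meet iff their horizontal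
sections overlap at some height `y`. The two overlap conditions are affine in `y`; if neither
trapezoid lies to the left of the other, each of them holds at one end of `[0, 1]`, and since their
sum (the total width of the two sections) is nonnegative, both hold at an end or where one of them
vanishes.
-/

open Set

def trapezoid (a b c d : ℝ) : Set (ℝ × ℝ) :=
  convexHull ℝ {(a, 1), (b, 1), (c, 0), (d, 0)}

theorem trapezoid_eq {a b c d : ℝ} (hab : a ≤ b) (hcd : c ≤ d) :
    trapezoid a b c d =
      {p | p.2 ∈ Icc 0 1 ∧ p.1 ∈ Icc ((1 - p.2) * c + p.2 * a) ((1 - p.2) * d + p.2 * b)} := by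
  apply Subset.antisymm
  · refine convexHull_min ?_ ?_
    · rintro p (rfl | rfl | rfl | rfl) <;> simp [hab, hcd]
    · rintro p ⟨⟨hp0, hp1⟩, hpl, hpr⟩ q ⟨⟨hq0, hq1⟩, hql, hqr⟩ α β hα hβ hαβ
      obtain rfl : β = 1 - α := by linarith
      simp only [mem_ofPred_eq, mem_Icc, Prod.fst_add, Prod.snd_add, Prod.smul_fst, Prod.smul_snd,
        smul_eq_mul]
      refine ⟨⟨by positivity, by nlinarith⟩, ?_, ?_⟩
      · linarith [mul_le_mul_of_nonneg_left hpl hα, mul_le_mul_of_nonneg_left hql hβ]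
      · linarith [mul_le_mul_of_nonneg_left hpr hα, mul_le_mul_of_nonneg_left hqr hβ]
  · rintro ⟨x, y⟩ ⟨hy, hxl, hxr⟩
    have hleg {x₀ x₁ : ℝ} (h₀ : ((x₀, 0) : ℝ × ℝ) ∈ ({(a, 1), (b, 1), (c, 0), (d, 0)} : Set _))
        (h₁ : ((x₁, 1) : ℝ × ℝ) ∈ ({(a, 1), (b, 1), (c, 0), (d, 0)} : Set _)) :
        ((1 - y) * x₀ + y * x₁, y) ∈ trapezoid a b c d :=
      segment_subset_convexHull h₀ h₁ ⟨1 - y, y, by linarith [hy.2], hy.1, by ring, by simp⟩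
    have hleft := hleg (x₀ := c) (x₁ := a) (by simp) (by simp)
    have hright := hleg (x₀ := d) (x₁ := b) (by simp) (by simp)
    refine (convex_convexHull ℝ _).segment_subset hleft hright ?_
    rw [← Prod.image_mk_segment_left, segment_eq_Icc (hxl.trans hxr)]
    exact mem_image_of_mem _ ⟨hxl, hxr⟩

lemma trapezoid_inter_nonempty_iff {au bu cu du av bv cv dv : ℝ}
    (hu1 : au ≤ bu) (hu2 : cu ≤ du) (hv1 : av ≤ bv) (hv2 : cv ≤ dv) :
    (trapezoid au bu cu du ∩ trapezoid av bv cv dv).Nonempty ↔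
      ∃ y ∈ Icc (0 : ℝ) 1, (1 - y) * cu + y * au ≤ (1 - y) * dv + y * bv ∧
        (1 - y) * cv + y * av ≤ (1 - y) * du + y * bu := by
  rw [trapezoid_eq hu1 hu2, trapezoid_eq hv1 hv2]
  constructor
  · rintro ⟨⟨x, y⟩, ⟨hy, hu⟩, -, hv⟩
    exact ⟨y, hy, hu.1.trans hv.2, hv.1.trans hu.2⟩
  · rintro ⟨y, hy, hleft, hright⟩
    have hu : (1 - y) * cu + y * au ≤ (1 - y) * du + y * bu := by nlinarith [hy.1, hy.2]
    have hv : (1 - y) * cv + y * av ≤ (1 - y) * dv + y * bv := by nlinarith [hy.1, hy.2]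
    exact ⟨(max ((1 - y) * cu + y * au) ((1 - y) * cv + y * av), y),
      ⟨hy, le_max_left _ _, max_le hu hright⟩, hy, le_max_right _ _, max_le hleft hv⟩

lemma exists_mem_Icc_nonneg_of_cross {f₀ f₁ g₀ g₁ : ℝ} (hf₁ : 0 ≤ f₁) (hg₀ : 0 ≤ g₀)
    (h₀ : 0 ≤ f₀ + g₀) (h₁ : 0 ≤ f₁ + g₁) :
    ∃ y ∈ Icc (0 : ℝ) 1, 0 ≤ (1 - y) * f₀ + y * f₁ ∧ 0 ≤ (1 - y) * g₀ + y * g₁ := by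
  rcases le_or_gt 0 f₀ with hf₀ | hf₀
  · exact ⟨0, ⟨le_rfl, zero_le_one⟩, by simpa using hf₀, by simpa using hg₀⟩
  have hpos : 0 < f₁ - f₀ := by linarith
  -- at the zero of `f` on `[0, 1]`, `g = (f + g) - f ≥ 0`
  obtain ⟨y, ⟨hy₀, hy₁⟩, hfy⟩ : ∃ y ∈ Icc (0 : ℝ) 1, (1 - y) * f₀ + y * f₁ = 0 :=
    ⟨-f₀ / (f₁ - f₀), ⟨div_nonneg (by linarith) hpos.le, (div_le_one hpos).2 (by linarith)⟩,
      by field_simp; ring⟩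
  refine ⟨y, ⟨hy₀, hy₁⟩, hfy.ge, ?_⟩
  linarith [mul_nonneg (sub_nonneg.2 hy₁) h₀, mul_nonneg hy₀ h₁]

lemma exists_mem_Icc_nonneg {f₀ f₁ g₀ g₁ : ℝ} (hf : 0 ≤ f₀ ∨ 0 ≤ f₁) (hg : 0 ≤ g₀ ∨ 0 ≤ g₁)
    (h₀ : 0 ≤ f₀ + g₀) (h₁ : 0 ≤ f₁ + g₁) :
    ∃ y ∈ Icc (0 : ℝ) 1, 0 ≤ (1 - y) * f₀ + y * f₁ ∧ 0 ≤ (1 - y) * g₀ + y * g₁ := by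
  rcases hf with hf₀ | hf₁ <;> rcases hg with hg₀ | hg₁
  · exact ⟨0, ⟨le_rfl, zero_le_one⟩, by simpa using hf₀, by simpa using hg₀⟩
  · obtain ⟨y, hy, hgy, hfy⟩ :=
      exists_mem_Icc_nonneg_of_cross (f₀ := g₀) (g₁ := f₁) hg₁ hf₀ (by linarith) (by linarith)
    exact ⟨y, hy, hfy, hgy⟩
  · exact exists_mem_Icc_nonneg_of_cross hf₁ hg₀ h₀ h₁
  · exact ⟨1, ⟨zero_le_one, le_rfl⟩, by simpa using hf₁, by simpa using hg₁⟩

lemma convex_combo_lt {s t s' t' y : ℝ} (hy : y ∈ Icc (0 : ℝ) 1) (h : s < t) (h' : s' < t') :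
    (1 - y) * s + y * s' < (1 - y) * t + y * t' := by
  rcases hy.1.eq_or_lt with rfl | hy₀
  · simpa using h
  · nlinarith [mul_pos hy₀ (sub_pos.2 h'), mul_nonneg (sub_nonneg.2 hy.2) (sub_nonneg.2 h.le)]

lemma exists_overlap_iff {au bu cu du av bv cv dv : ℝ}
    (hu1 : au ≤ bu) (hu2 : cu ≤ du) (hv1 : av ≤ bv) (hv2 : cv ≤ dv) :
    (∃ y ∈ Icc (0 : ℝ) 1, (1 - y) * cu + y * au ≤ (1 - y) * dv + y * bv ∧
        (1 - y) * cv + y * av ≤ (1 - y) * du + y * bu) ↔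
      ¬((bu < av ∧ du < cv) ∨ (bv < au ∧ dv < cu)) := by
  constructor
  · rintro ⟨y, hy, hleft, hright⟩ (⟨hb, hd⟩ | ⟨hb, hd⟩)
    · exact (convex_combo_lt hy hd hb).not_ge hright
    · exact (convex_combo_lt hy hd hb).not_ge hleft
  · simp only [not_or, not_and_or, not_lt]
    rintro ⟨hf, hg⟩
    obtain ⟨y, hy, hfy, hgy⟩ := exists_mem_Icc_nonneg (f₀ := du - cv) (f₁ := bu - av)
      (g₀ := dv - cu) (g₁ := bv - au) (by simpa [sub_nonneg, or_comm] using hf)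
      (by simpa [sub_nonneg, or_comm] using hg) (by linarith) (by linarith)
    exact ⟨y, hy, by linarith, by linarith⟩

/-- Two trapezoids between the lines `y = 1` and `y = 0` are disjoint if and only if one of
them lies entirely to the left of the other on both lines. -/
theorem stmt15 (au bu cu du av bv cv dv : ℝ)
    (hu1 : au ≤ bu) (hu2 : cu ≤ du) (hv1 : av ≤ bv) (hv2 : cv ≤ dv) :
    convexHull ℝ {((au, 1) : ℝ × ℝ), (bu, 1), (cu, 0), (du, 0)} ∩
        convexHull ℝ {((av, 1) : ℝ × ℝ), (bv, 1), (cv, 0), (dv, 0)} = ∅ ↔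
      (bu < av ∧ du < cv) ∨ (bv < au ∧ dv < cu) := by
  change trapezoid au bu cu du ∩ trapezoid av bv cv dv = ∅ ↔ _
  rw [← not_nonempty_iff_eq_empty, trapezoid_inter_nonempty_iff hu1 hu2 hv1 hv2,
    exists_overlap_iff hu1 hu2 hv1 hv2, not_not]
end
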